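/- arXiv:1912.09983 — 7 statements merged into one kernel-verified Lean document; each statement's English description precedes it below -/
import Mathlib

section
/- Integral representation of the Wilcoxon rank-sum estimand: Let T_1 and T_2 be independent random variables with values in (0, infinity), with survival functions S_1 and S_2 respectively. Then P(T_1 < T_2) + (1/2) P(T_1 = T_2) = 1 + integral over (0, infinity) of Š_1(t) dS_2(t), where Š_1(t) = (S_1(t) + S_1(t-))/2. -/
/-!
By independence the law of `(T₂, T₁)` is the product `ν₂ ⊗ ν₁` of the marginal laws, so Fubini
gives `P(T₂ < T₁) = ∫ S₁ dν₂` and `P(T₂ ≤ T₁) = ∫ S₁(t-) dν₂`, where `S₁(t-) = P(T₁ ≥ t)` is read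
off from the Stieltjes measure of the distribution function. The measure `-dS₂` is `ν₂`, which
lives on `(0, ∞)`, so `-∫ Š₁ dS₂` is the mean of these two probabilities, and the identity follows
from `P(T₁ < T₂) = 1 - P(T₂ ≤ T₁)` and `P(T₂ ≤ T₁) = P(T₂ < T₁) + P(T₁ = T₂)`.
-/

open MeasureTheory ProbabilityTheory Set Function

namespace ProbabilityTheory

variable (ν : Measure ℝ) [IsProbabilityMeasure ν]

lemma measureReal_Ioi_eq_one_sub_cdf (t : ℝ) : ν.real (Ioi t) = 1 - cdf ν t := by
  rw [← compl_Iic, probReal_compl_eq_one_sub measurableSet_Iic, cdf_eq_real]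

lemma measure_Ioc_eq_ofReal_measureReal_Ioi_sub (a b : ℝ) :
    ν (Ioc a b) = ENNReal.ofReal (ν.real (Ioi a) - ν.real (Ioi b)) := by
  rw [measureReal_Ioi_eq_one_sub_cdf, measureReal_Ioi_eq_one_sub_cdf, sub_sub_sub_cancel_left,
    ← StieltjesFunction.measure_Ioc, measure_cdf]

lemma leftLim_measureReal_Ioi (t : ℝ) :
    leftLim (fun s => ν.real (Ioi s)) t = ν.real (Ici t) := by
  have hcdf : leftLim (cdf ν) t ≤ 1 := (monotone_cdf ν).leftLim_le le_rfl |>.trans (cdf_le_one ν t)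
  simp_rw [measureReal_Ioi_eq_one_sub_cdf]
  rw [leftLim_eq_of_tendsto (tendsto_const_nhds.sub ((monotone_cdf ν).tendsto_leftLim t)),
    measureReal_def, ← measure_cdf ν, StieltjesFunction.measure_Ici _ (tendsto_cdf_atTop ν),
    ENNReal.toReal_ofReal (sub_nonneg.mpr hcdf), measure_cdf]

lemma eq_of_measure_Ioc_eq_ofReal_measureReal_Ioi_sub {μ : Measure ℝ}
    (h : ∀ a b, a ≤ b → μ (Ioc a b) = ENNReal.ofReal (ν.real (Ioi a) - ν.real (Ioi b))) :
    μ = ν :=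
  Measure.ext_of_Ioc' μ ν (fun a b hab => h a b hab.le ▸ ENNReal.ofReal_ne_top)
    fun a b hab => by rw [h a b hab.le, measure_Ioc_eq_ofReal_measureReal_Ioi_sub]

end ProbabilityTheory

namespace MeasureTheory.Measure

variable {α β : Type*} [MeasurableSpace α] [MeasurableSpace β] {μ : Measure α} {ν : Measure β}

lemma measureReal_prod_apply [SFinite ν] {s : Set (α × β)} (hs : MeasurableSet s)
    (h : μ.prod ν s ≠ ⊤) : (μ.prod ν).real s = ∫ x, ν.real (Prod.mk x ⁻¹' s) ∂μ := by
  rw [measureReal_def, prod_apply hs,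
    ← integral_toReal (measurable_measure_prodMk_left hs).aemeasurable (ae_measure_lt_top hs h)]
  rfl

end MeasureTheory.Measure

namespace ProbabilityTheory.IndepFun

variable {Ω α β : Type*} [MeasurableSpace Ω] [MeasurableSpace α] [MeasurableSpace β]
  {P : Measure Ω} [IsFiniteMeasure P] {X : Ω → α} {Y : Ω → β}

lemma measureReal_preimage_eq_integral (h : IndepFun X Y P) (hX : Measurable X)
    (hY : Measurable Y) {s : Set (α × β)} (hs : MeasurableSet s) :
    P.real ((fun ω => (X ω, Y ω)) ⁻¹' s) = ∫ x, (P.map Y).real (Prod.mk x ⁻¹' s) ∂(P.map X) := by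
  rw [← map_measureReal_apply (hX.prodMk hY) hs,
    (indepFun_iff_map_prod_eq_prod_map_map hX.aemeasurable hY.aemeasurable).mp h,
    Measure.measureReal_prod_apply hs (measure_ne_top _ _)]

end ProbabilityTheory.IndepFun

namespace ProbabilityTheory

variable {Ω α : Type*} [MeasurableSpace Ω] {P : Measure Ω} {X Y : Ω → α}
  [LinearOrder α] [TopologicalSpace α] [OrderClosedTopology α] [SecondCountableTopology α]
  [MeasurableSpace α] [OpensMeasurableSpace α]

lemma IndepFun.integral_measureReal_Ioi_add_Ici [IsFiniteMeasure P] (h : IndepFun X Y P)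
    (hX : Measurable X) (hY : Measurable Y) :
    ∫ x, ((P.map Y).real (Ioi x) + (P.map Y).real (Ici x)) / 2 ∂(P.map X)
      = (P.real {ω | X ω < Y ω} + P.real {ω | X ω ≤ Y ω}) / 2 := by
  have hlt : MeasurableSet {p : α × α | p.1 < p.2} :=
    measurableSet_lt measurable_fst measurable_snd
  have hle : MeasurableSet {p : α × α | p.1 ≤ p.2} :=
    measurableSet_le measurable_fst measurable_snd
  have hint_lt : Integrable (fun x => (P.map Y).real (Ioi x)) (P.map X) :=
    Measure.integrable_measure_prodMk_left hlt (measure_ne_top _ _)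
  have hint_le : Integrable (fun x => (P.map Y).real (Ici x)) (P.map X) :=
    Measure.integrable_measure_prodMk_left hle (measure_ne_top _ _)
  rw [integral_div, integral_add hint_lt hint_le]
  -- `Prod.mk x ⁻¹' {p | p.1 < p.2}` is `Ioi x` by definition, and likewise for `Ici x`.
  congr 2
  · exact (h.measureReal_preimage_eq_integral hX hY hlt).symm
  · exact (h.measureReal_preimage_eq_integral hX hY hle).symm

lemma measureReal_lt_add_half_measureReal_eq [IsProbabilityMeasure P] (hX : Measurable X)
    (hY : Measurable Y) :
    P.real {ω | X ω < Y ω} + 1 / 2 * P.real {ω | X ω = Y ω}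
      = 1 - (P.real {ω | Y ω < X ω} + P.real {ω | Y ω ≤ X ω}) / 2 := by
  have hcompl : P.real {ω | X ω < Y ω} = 1 - P.real {ω | Y ω ≤ X ω} := by
    rw [← probReal_compl_eq_one_sub (measurableSet_le hY hX)]
    congr 1
    ext ω
    simp
  have hsplit : P.real {ω | Y ω ≤ X ω} = P.real {ω | Y ω < X ω} + P.real {ω | X ω = Y ω} := by
    rw [← measureReal_union (disjoint_left.mpr fun ω hlt heq => hlt.ne' heq)
      (measurableSet_eq_fun hX hY)]
    congr 1
    ext ω
    simp [le_iff_lt_or_eq, eq_comm]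
  linarith

end ProbabilityTheory

theorem wilcoxon_integral_representation_general
    {Ω : Type*} [MeasurableSpace Ω] (P : Measure Ω) [IsProbabilityMeasure P]
    (T₁ T₂ : Ω → ℝ) (hT₁ : Measurable T₁) (hT₂ : Measurable T₂)
    (hpos₂ : ∀ ω, 0 < T₂ ω)
    (hindep : IndepFun T₁ T₂ P)
    (S₁ S₂ : ℝ → ℝ)
    (hS₁ : ∀ t, S₁ t = (P {ω | t < T₁ ω}).toReal)
    (hS₂ : ∀ t, S₂ t = (P {ω | t < T₂ ω}).toReal)
    (μ₂ : Measure ℝ)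
    (hμ₂ : ∀ a b : ℝ, a ≤ b → μ₂ (Set.Ioc a b) = ENNReal.ofReal (S₂ a - S₂ b)) :
    (P {ω | T₁ ω < T₂ ω}).toReal + (1 / 2) * (P {ω | T₁ ω = T₂ ω}).toReal
      = 1 + -∫ t in Set.Ioi (0 : ℝ), (S₁ t + Function.leftLim S₁ t) / 2 ∂μ₂ := by
  have := Measure.isProbabilityMeasure_map (μ := P) hT₁.aemeasurable
  have := Measure.isProbabilityMeasure_map (μ := P) hT₂.aemeasurable
  have hS₁_eq : S₁ = fun t => (P.map T₁).real (Ioi t) :=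
    funext fun t => (hS₁ t).trans (map_measureReal_apply hT₁ measurableSet_Ioi).symm
  have hS₂_eq : S₂ = fun t => (P.map T₂).real (Ioi t) :=
    funext fun t => (hS₂ t).trans (map_measureReal_apply hT₂ measurableSet_Ioi).symm
  have hμ₂_eq : μ₂ = P.map T₂ :=
    eq_of_measure_Ioc_eq_ofReal_measureReal_Ioi_sub _ fun a b hab => by rw [hμ₂ a b hab, hS₂_eq]
  have hT₂_mem : ∀ᵐ t ∂(P.map T₂), t ∈ Ioi (0 : ℝ) :=
    (ae_map_iff hT₂.aemeasurable measurableSet_Ioi).mpr (ae_of_all _ hpos₂)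
  rw [hμ₂_eq, Measure.restrict_eq_self_of_ae_mem hT₂_mem, hS₁_eq]
  simp_rw [leftLim_measureReal_Ioi]
  rw [hindep.symm.integral_measureReal_Ioi_add_Ici hT₂ hT₁]
  simp_rw [← measureReal_def]
  linarith [measureReal_lt_add_half_measureReal_eq (P := P) hT₁ hT₂]

/-- **Integral representation of the Wilcoxon rank-sum estimand.**
`T₁` and `T₂` are independent random variables with values in `(0, ∞)`, with survival
functions `S₁` and `S₂`.  `μ₂` is the (nonnegative) Lebesgue–Stieltjes measure generated by the
nonincreasing right-continuous function `S₂`, i.e. the negative of the Stieltjes measure `dS₂`;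
thus `∫ f dS₂ = - ∫ f ∂μ₂`.  The claim is
`P(T₁ < T₂) + (1/2) P(T₁ = T₂) = 1 + ∫_{(0,∞)} Š₁ dS₂` where `Š₁(t) = (S₁(t) + S₁(t-))/2`. -/
theorem wilcoxon_integral_representation
    {Ω : Type*} [MeasurableSpace Ω] (P : Measure Ω) [IsProbabilityMeasure P]
    (T₁ T₂ : Ω → ℝ) (hT₁ : Measurable T₁) (hT₂ : Measurable T₂)
    (hpos₁ : ∀ ω, 0 < T₁ ω) (hpos₂ : ∀ ω, 0 < T₂ ω)
    (hindep : IndepFun T₁ T₂ P)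
    (S₁ S₂ : ℝ → ℝ)
    (hS₁ : ∀ t, S₁ t = (P {ω | t < T₁ ω}).toReal)
    (hS₂ : ∀ t, S₂ t = (P {ω | t < T₂ ω}).toReal)
    (μ₂ : Measure ℝ)
    (hμ₂ : ∀ a b : ℝ, a ≤ b → μ₂ (Set.Ioc a b) = ENNReal.ofReal (S₂ a - S₂ b)) :
    (P {ω | T₁ ω < T₂ ω}).toReal + (1 / 2) * (P {ω | T₁ ω = T₂ ω}).toReal
      = 1 + -∫ t in Set.Ioi (0 : ℝ), (S₁ t + Function.leftLim S₁ t) / 2 ∂μ₂ :=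
  wilcoxon_integral_representation_general P T₁ T₂ hT₁ hT₂ hpos₂ hindep S₁ S₂ hS₁ hS₂ μ₂ hμ₂
end

section
/- Integral representation of the truncated Wilcoxon rank-sum estimand: Let tau > 0, and let T_1 and T_2 be independent random variables with values in (0, infinity), with survival functions S_1 and S_2 that are continuous at tau (i.e., P(T_1 = tau) = P(T_2 = tau) = 0). Write T̊_i = min(T_i, tau). Then P(T̊_1 < T̊_2) + (1/2) P(T̊_1 = T̊_2) = 1 + integral over (0, tau] of Š_1(t) dS_2(t) - (1/2) S_1(tau) S_2(tau), where Š_1(t) = (S_1(t) + S_1(t-))/2. -/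
open MeasureTheory ProbabilityTheory Set Function

open Filter Topology

section Aux

lemma aux_leftLim (μ : Measure ℝ) [IsFiniteMeasure μ] (t : ℝ) :
    Function.leftLim (fun s => (μ (Set.Ioi s)).toReal) t = (μ (Set.Ici t)).toReal := by
  have hanti : Antitone (fun s => (μ (Set.Ioi s)).toReal) := fun a b hab =>
    ENNReal.toReal_mono (measure_ne_top _ _) (measure_mono (Set.Ioi_subset_Ioi hab))
  have hseq : Tendsto (fun n : ℕ => t - 1 / (n + 1)) atTop (𝓝[<] t) := by
    rw [tendsto_nhdsWithin_iff]
    constructor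
    · have : Tendsto (fun n : ℕ => 1 / ((n : ℝ) + 1)) atTop (𝓝 0) :=
        tendsto_one_div_add_atTop_nhds_zero_nat
      simpa using tendsto_const_nhds.sub this
    · filter_upwards with n
      have : (0:ℝ) < 1 / (n + 1) := by positivity
      simp only [Set.mem_Iio]; linarith
  have hInter : ⋂ n : ℕ, Set.Ioi (t - 1 / (n + 1)) = Set.Ici t := by
    ext x
    simp only [Set.mem_iInter, Set.mem_Ioi, Set.mem_Ici]
    constructor
    · intro h
      by_contra hx
      push_neg at hx
      obtain ⟨n, hn⟩ := exists_nat_one_div_lt (sub_pos.mpr hx)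
      have := h n; linarith
    · intro h n
      have : (0:ℝ) < 1 / (n + 1) := by positivity
      linarith
  have h2 : Tendsto (fun n : ℕ => μ (Set.Ioi (t - 1 / (n + 1)))) atTop (𝓝 (μ (Set.Ici t))) := by
    rw [← hInter]
    refine tendsto_measure_iInter_atTop (fun n => measurableSet_Ioi.nullMeasurableSet) ?_
      ⟨0, measure_ne_top _ _⟩
    intro n m hnm
    apply Set.Ioi_subset_Ioi
    have : 1 / ((m : ℝ) + 1) ≤ 1 / ((n : ℝ) + 1) := by
      apply one_div_le_one_div_of_le (by positivity)
      have : (n:ℝ) ≤ (m:ℝ) := Nat.cast_le.mpr hnm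
      linarith
    linarith
  have h2' : Tendsto (fun n : ℕ => (μ (Set.Ioi (t - 1 / (n + 1)))).toReal) atTop
      (𝓝 ((μ (Set.Ici t)).toReal)) :=
    (ENNReal.tendsto_toReal (measure_ne_top _ _)).comp h2
  have h1 : Tendsto (fun n : ℕ => (μ (Set.Ioi (t - 1 / (n + 1)))).toReal) atTop
      (𝓝 (Function.leftLim (fun s => (μ (Set.Ioi s)).toReal) t)) :=
    (hanti.tendsto_leftLim t).comp hseq
  exact tendsto_nhds_unique h1 h2'

lemma aux_setmin_lt {a b τ : ℝ} : min a τ < min b τ ↔ (a < b ∧ a < τ) := by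
  simp only [min_lt_iff, lt_min_iff]
  constructor
  · rintro ⟨h1, h2⟩
    have ha : a < τ := by rcases h2 with h | h; exact h; linarith
    refine ⟨?_, ha⟩
    rcases h1 with h | h; exact h; linarith
  · rintro ⟨h1, h2⟩
    exact ⟨Or.inl h1, Or.inl h2⟩

lemma aux_setmin_eq {a b τ : ℝ} : min a τ = min b τ ↔ ((a = b ∧ a < τ) ∨ (τ ≤ a ∧ τ ≤ b)) := by
  constructor
  · intro h
    rcases lt_or_ge a τ with h1 | h1
    · rw [min_eq_left h1.le] at h
      rcases lt_or_ge b τ with h2 | h2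
      · rw [min_eq_left h2.le] at h; exact Or.inl ⟨h, h1⟩
      · rw [min_eq_right h2] at h; linarith
    · rw [min_eq_right h1] at h
      rcases lt_or_ge b τ with h2 | h2
      · rw [min_eq_left h2.le] at h; linarith
      · exact Or.inr ⟨h1, h2⟩
  · rintro (⟨rfl, _⟩ | ⟨h1, h2⟩)
    · rfl
    · rw [min_eq_right h1, min_eq_right h2]
end Aux

/-- **Integral representation of the truncated Wilcoxon rank-sum estimand.**
`T₁`, `T₂` are independent random variables with values in `(0,∞)`, survival functions
`S₁`, `S₂`, which are continuous at `τ` (i.e. `P(Tᵢ = τ) = 0`).  `μ₂` is the nonnegative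
Lebesgue–Stieltjes measure generated by the nonincreasing right-continuous `S₂`
(`∫ f dS₂ = -∫ f ∂μ₂`).  With `T̊ᵢ = min (Tᵢ, τ)`,
`P(T̊₁ < T̊₂) + (1/2) P(T̊₁ = T̊₂) = 1 + ∫_{(0,τ]} Š₁ dS₂ - (1/2) S₁(τ) S₂(τ)`. -/
theorem truncated_wilcoxon_integral_representation
    {Ω : Type*} [MeasurableSpace Ω] (P : Measure Ω) [IsProbabilityMeasure P]
    (τ : ℝ) (hτ : 0 < τ)
    (T₁ T₂ : Ω → ℝ) (hT₁ : Measurable T₁) (hT₂ : Measurable T₂)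
    (hpos₁ : ∀ ω, 0 < T₁ ω) (hpos₂ : ∀ ω, 0 < T₂ ω)
    (hindep : IndepFun T₁ T₂ P)
    (hcont₁ : P {ω | T₁ ω = τ} = 0) (hcont₂ : P {ω | T₂ ω = τ} = 0)
    (S₁ S₂ : ℝ → ℝ)
    (hS₁ : ∀ t, S₁ t = (P {ω | t < T₁ ω}).toReal)
    (hS₂ : ∀ t, S₂ t = (P {ω | t < T₂ ω}).toReal)
    (μ₂ : Measure ℝ)
    (hμ₂ : ∀ a b : ℝ, a ≤ b → μ₂ (Set.Ioc a b) = ENNReal.ofReal (S₂ a - S₂ b)) :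
    (P {ω | min (T₁ ω) τ < min (T₂ ω) τ}).toReal
        + (1 / 2) * (P {ω | min (T₁ ω) τ = min (T₂ ω) τ}).toReal
      = 1 + -∫ t in Set.Ioc (0 : ℝ) τ, (S₁ t + Function.leftLim S₁ t) / 2 ∂μ₂
          - (1 / 2) * S₁ τ * S₂ τ := by
  have hν₁ : ∀ s : Set ℝ, MeasurableSet s → (P.map T₁) s = P (T₁ ⁻¹' s) :=
    fun s hs => Measure.map_apply hT₁ hs
  have hν₂ : ∀ s : Set ℝ, MeasurableSet s → (P.map T₂) s = P (T₂ ⁻¹' s) :=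
    fun s hs => Measure.map_apply hT₂ hs
  haveI : IsProbabilityMeasure (P.map T₁) := Measure.isProbabilityMeasure_map hT₁.aemeasurable
  haveI : IsProbabilityMeasure (P.map T₂) := Measure.isProbabilityMeasure_map hT₂.aemeasurable
  have hS₁' : S₁ = fun t => ((P.map T₁) (Set.Ioi t)).toReal := by
    funext t; rw [hS₁, hν₁ _ measurableSet_Ioi]; rfl
  have hS₂' : ∀ t, S₂ t = ((P.map T₂) (Set.Ioi t)).toReal := by
    intro t; rw [hS₂, hν₂ _ measurableSet_Ioi]; rfl
  -- ν₂ on Ioc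
  have hν₂Ioc : ∀ a b : ℝ, a ≤ b → (P.map T₂) (Set.Ioc a b) = ENNReal.ofReal (S₂ a - S₂ b) := by
    intro a b hab
    have h1 : Set.Ioi a = Set.Ioc a b ∪ Set.Ioi b := (Set.Ioc_union_Ioi_eq_Ioi hab).symm
    have hdisj : Disjoint (Set.Ioc a b) (Set.Ioi b) := by
      rw [Set.disjoint_left]; rintro x ⟨_, hx2⟩ hx3
      exact absurd hx3 (not_lt.mpr hx2)
    have h2 : (P.map T₂) (Set.Ioi a) = (P.map T₂) (Set.Ioc a b) + (P.map T₂) (Set.Ioi b) := by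
      rw [h1, measure_union hdisj measurableSet_Ioi]
    rw [hS₂' a, hS₂' b, h2, ENNReal.toReal_add (measure_ne_top _ _) (measure_ne_top _ _)]
    rw [add_sub_cancel_right, ENNReal.ofReal_toReal (measure_ne_top _ _)]
  -- restriction equality
  haveI hfinμ₂ : IsFiniteMeasure (μ₂.restrict (Set.Ioc 0 τ)) := by
    constructor
    rw [Measure.restrict_apply_univ, hμ₂ 0 τ hτ.le]
    exact ENNReal.ofReal_lt_top
  have hrestr : μ₂.restrict (Set.Ioc 0 τ) = (P.map T₂).restrict (Set.Ioc 0 τ) := by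
    refine MeasureTheory.Measure.ext_of_Ioc_finite _ _ ?_ ?_
    · rw [Measure.restrict_apply_univ, Measure.restrict_apply_univ, hμ₂ 0 τ hτ.le,
        hν₂Ioc 0 τ hτ.le]
    · intro a b _
      rw [Measure.restrict_apply measurableSet_Ioc, Measure.restrict_apply measurableSet_Ioc,
        Set.Ioc_inter_Ioc]
      rcases le_or_gt (a ⊔ 0) (b ⊓ τ) with h | h
      · rw [hμ₂ _ _ h, hν₂Ioc _ _ h]
      · rw [Set.Ioc_eq_empty h.not_gt]; simp
  -- joint law is product
  have hmap : P.map (fun ω => (T₁ ω, T₂ ω)) = (P.map T₁).prod (P.map T₂) :=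
    (indepFun_iff_map_prod_eq_prod_map_map hT₁.aemeasurable hT₂.aemeasurable).mp hindep
  -- key Fubini identity
  have key : ∀ r : ℝ → Set ℝ, MeasurableSet {p : ℝ × ℝ | p.1 ∈ r p.2} →
      ∫⁻ y in Set.Ioc 0 τ, (P.map T₁) (r y) ∂(P.map T₂)
        = P {ω | T₁ ω ∈ r (T₂ ω) ∧ T₂ ω ∈ Set.Ioc 0 τ} := by
    intro r hr
    set U : Set (ℝ × ℝ) := {p : ℝ × ℝ | p.1 ∈ r p.2} ∩ {p : ℝ × ℝ | p.2 ∈ Set.Ioc 0 τ} with hUdef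
    have hUm : MeasurableSet U := hr.inter (measurable_snd measurableSet_Ioc)
    have h1 : ((P.map T₁).prod (P.map T₂)) U = P {ω | T₁ ω ∈ r (T₂ ω) ∧ T₂ ω ∈ Set.Ioc 0 τ} := by
      rw [← hmap, Measure.map_apply (hT₁.prodMk hT₂) hUm]
      rfl
    have h2 : ((P.map T₁).prod (P.map T₂)) U
        = ∫⁻ y in Set.Ioc 0 τ, (P.map T₁) (r y) ∂(P.map T₂) := by
      rw [Measure.prod_apply_symm hUm, ← lintegral_indicator measurableSet_Ioc]
      refine lintegral_congr fun y => ?_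
      by_cases hy : y ∈ Set.Ioc 0 τ
      · have : ((fun x => (x, y)) ⁻¹' U) = r y := by
          ext x
          simp only [hUdef, Set.mem_preimage, Set.mem_inter_iff, Set.mem_setOf_eq]
          exact and_iff_left hy
        rw [this, Set.indicator_of_mem hy]
      · have : ((fun x => (x, y)) ⁻¹' U) = ∅ := by
          ext x
          simp only [hUdef, Set.mem_preimage, Set.mem_inter_iff, Set.mem_setOf_eq,
            Set.mem_empty_iff_false, iff_false]
          exact fun h => hy h.2
        rw [this, Set.indicator_of_notMem hy, measure_empty]
    rw [← h2, h1]
  have key_lt : ∫⁻ y in Set.Ioc 0 τ, (P.map T₁) (Set.Ioi y) ∂(P.map T₂)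
      = P {ω | T₂ ω < T₁ ω ∧ T₂ ω ∈ Set.Ioc 0 τ} :=
    key (fun y => Set.Ioi y) (measurableSet_lt measurable_snd measurable_fst)
  have key_le : ∫⁻ y in Set.Ioc 0 τ, (P.map T₁) (Set.Ici y) ∂(P.map T₂)
      = P {ω | T₂ ω ≤ T₁ ω ∧ T₂ ω ∈ Set.Ioc 0 τ} :=
    key (fun y => Set.Ici y) (measurableSet_le measurable_snd measurable_fst)
  -- the Bochner integral
  have hg1 : Measurable fun t : ℝ => (P.map T₁) (Set.Ioi t) :=
    Antitone.measurable (fun a b hab => measure_mono (Set.Ioi_subset_Ioi hab))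
  have hg2 : Measurable fun t : ℝ => (P.map T₁) (Set.Ici t) :=
    Antitone.measurable (fun a b hab => measure_mono (Set.Ici_subset_Ici.mpr hab))
  have hInt : ∫ t in Set.Ioc (0:ℝ) τ, (S₁ t + Function.leftLim S₁ t) / 2 ∂μ₂
      = ((P {ω | T₂ ω < T₁ ω ∧ T₂ ω ∈ Set.Ioc 0 τ}
          + P {ω | T₂ ω ≤ T₁ ω ∧ T₂ ω ∈ Set.Ioc 0 τ}) / 2).toReal := by
    rw [hrestr, hS₁']
    simp only [aux_leftLim]
    rw [integral_eq_lintegral_of_nonneg_ae]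
    · congr 1
      have heq : ∀ t : ℝ, ENNReal.ofReal
            ((((P.map T₁) (Set.Ioi t)).toReal + ((P.map T₁) (Set.Ici t)).toReal) / 2)
          = ((P.map T₁) (Set.Ioi t) + (P.map T₁) (Set.Ici t)) / 2 := by
        intro t
        rw [ENNReal.ofReal_div_of_pos two_pos,
          ENNReal.ofReal_add ENNReal.toReal_nonneg ENNReal.toReal_nonneg,
          ENNReal.ofReal_toReal (measure_ne_top _ _), ENNReal.ofReal_toReal (measure_ne_top _ _),
          ENNReal.ofReal_ofNat]
      calc ∫⁻ t, ENNReal.ofReal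
            ((((P.map T₁) (Set.Ioi t)).toReal + ((P.map T₁) (Set.Ici t)).toReal) / 2)
            ∂((P.map T₂).restrict (Set.Ioc 0 τ))
          = ∫⁻ t, ((P.map T₁) (Set.Ioi t) + (P.map T₁) (Set.Ici t)) / 2
            ∂((P.map T₂).restrict (Set.Ioc 0 τ)) := lintegral_congr heq
        _ = (∫⁻ t, ((P.map T₁) (Set.Ioi t) + (P.map T₁) (Set.Ici t))
            ∂((P.map T₂).restrict (Set.Ioc 0 τ))) / 2 := by
            simp_rw [ENNReal.div_eq_inv_mul]
            exact lintegral_const_mul _ (hg1.add hg2)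
        _ = (P {ω | T₂ ω < T₁ ω ∧ T₂ ω ∈ Set.Ioc 0 τ}
            + P {ω | T₂ ω ≤ T₁ ω ∧ T₂ ω ∈ Set.Ioc 0 τ}) / 2 := by
            rw [lintegral_add_left hg1, key_lt, key_le]
    · filter_upwards with t
      positivity
    · exact ((hg1.ennreal_toReal.add hg2.ennreal_toReal).div_const 2).aestronglyMeasurable
  -- events
  set E1 : Set Ω := {ω | T₁ ω < T₂ ω ∧ T₁ ω < τ} with hE1
  set E2 : Set Ω := {ω | T₁ ω = T₂ ω ∧ T₁ ω < τ} with hE2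
  set E3 : Set Ω := {ω | T₂ ω < T₁ ω ∧ T₂ ω < τ} with hE3
  set E4 : Set Ω := {ω | τ < T₁ ω ∧ τ < T₂ ω} with hE4
  have hE1m : MeasurableSet E1 :=
    (measurableSet_lt hT₁ hT₂).inter (measurableSet_lt hT₁ measurable_const)
  have hE2m : MeasurableSet E2 :=
    (measurableSet_eq_fun hT₁ hT₂).inter (measurableSet_lt hT₁ measurable_const)
  have hE3m : MeasurableSet E3 :=
    (measurableSet_lt hT₂ hT₁).inter (measurableSet_lt hT₂ measurable_const)
  have hE4m : MeasurableSet E4 :=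
    (measurableSet_lt measurable_const hT₁).inter (measurableSet_lt measurable_const hT₂)
  have hNle : P ({ω | T₁ ω = τ} ∪ {ω | T₂ ω = τ}) = 0 := measure_union_null hcont₁ hcont₂
  -- disjointness
  have d12 : Disjoint E1 E2 := by
    rw [Set.disjoint_left]; rintro ω ⟨h, _⟩ ⟨h', _⟩; exact h.ne h'
  have d13 : Disjoint E1 E3 := by
    rw [Set.disjoint_left]; rintro ω ⟨h, _⟩ ⟨h', _⟩; exact h.asymm h'
  have d14 : Disjoint E1 E4 := by
    rw [Set.disjoint_left]; rintro ω ⟨_, h⟩ ⟨h', _⟩; exact h.asymm h'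
  have d23 : Disjoint E2 E3 := by
    rw [Set.disjoint_left]; rintro ω ⟨h, _⟩ ⟨h', _⟩; exact h'.ne' h
  have d24 : Disjoint E2 E4 := by
    rw [Set.disjoint_left]; rintro ω ⟨_, h⟩ ⟨h', _⟩; exact h.asymm h'
  have d34 : Disjoint E3 E4 := by
    rw [Set.disjoint_left]; rintro ω ⟨_, h⟩ ⟨_, h'⟩; exact h.asymm h'
  -- coverage
  have hcover : (Set.univ : Set Ω) ⊆ (E1 ∪ E2 ∪ E3 ∪ E4) ∪ ({ω | T₁ ω = τ} ∪ {ω | T₂ ω = τ}) := by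
    intro ω _
    by_cases h1 : T₁ ω = τ
    · exact Or.inr (Or.inl h1)
    by_cases h2 : T₂ ω = τ
    · exact Or.inr (Or.inr h2)
    left
    rcases lt_trichotomy (T₁ ω) (T₂ ω) with hlt | heq | hgt
    · rcases lt_or_ge (T₁ ω) τ with ha | ha
      · exact Or.inl (Or.inl (Or.inl ⟨hlt, ha⟩))
      · have ha' : τ < T₁ ω := lt_of_le_of_ne ha (Ne.symm h1)
        exact Or.inr ⟨ha', ha'.trans hlt⟩
    · rcases lt_or_ge (T₁ ω) τ with ha | ha
      · exact Or.inl (Or.inl (Or.inr ⟨heq, ha⟩))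
      · have ha' : τ < T₁ ω := lt_of_le_of_ne ha (Ne.symm h1)
        exact Or.inr ⟨ha', heq ▸ ha'⟩
    · rcases lt_or_ge (T₂ ω) τ with hb | hb
      · exact Or.inl (Or.inr ⟨hgt, hb⟩)
      · have hb' : τ < T₂ ω := lt_of_le_of_ne hb (Ne.symm h2)
        exact Or.inr ⟨hb'.trans hgt, hb'⟩
  have hP1 : P (E1 ∪ E2 ∪ E3 ∪ E4) = 1 := by
    refine le_antisymm prob_le_one ?_
    calc (1 : ENNReal) = P Set.univ := measure_univ.symm
      _ ≤ P ((E1 ∪ E2 ∪ E3 ∪ E4) ∪ ({ω | T₁ ω = τ} ∪ {ω | T₂ ω = τ})) := measure_mono hcover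
      _ ≤ P (E1 ∪ E2 ∪ E3 ∪ E4) + P ({ω | T₁ ω = τ} ∪ {ω | T₂ ω = τ}) := measure_union_le _ _
      _ = P (E1 ∪ E2 ∪ E3 ∪ E4) := by rw [hNle, add_zero]
  have hsum : P E1 + P E2 + P E3 + P E4 = 1 := by
    rw [← hP1, measure_union ((d14.union_left d24).union_left d34) hE4m,
      measure_union (d13.union_left d23) hE3m, measure_union d12 hE2m]
  -- identification of the goal's probabilities
  have hA : {ω | min (T₁ ω) τ < min (T₂ ω) τ} = E1 := by
    ext ω; rw [hE1]; exact aux_setmin_lt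
  have hE4sub : E4 ⊆ {ω | τ ≤ T₁ ω ∧ τ ≤ T₂ ω} := fun ω h => ⟨h.1.le, h.2.le⟩
  have hE4diff : P ({ω | τ ≤ T₁ ω ∧ τ ≤ T₂ ω} \ E4) = 0 := by
    refine measure_mono_null ?_ hNle
    rintro ω ⟨⟨h1, h2⟩, h3⟩
    simp only [hE4, Set.mem_setOf_eq, not_and, not_lt] at h3
    by_cases h : T₁ ω = τ
    · exact Or.inl h
    · have hτ1 : τ < T₁ ω := lt_of_le_of_ne h1 (Ne.symm h)
      exact Or.inr (le_antisymm (h3 hτ1) h2)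
  have hPE4w : P {ω | τ ≤ T₁ ω ∧ τ ≤ T₂ ω} = P E4 :=
    (measure_eq_measure_of_null_diff hE4sub hE4diff).symm
  have hB : P {ω | min (T₁ ω) τ = min (T₂ ω) τ} = P E2 + P E4 := by
    have hset : {ω | min (T₁ ω) τ = min (T₂ ω) τ} = E2 ∪ {ω | τ ≤ T₁ ω ∧ τ ≤ T₂ ω} := by
      ext ω
      rw [Set.mem_union, hE2]
      exact aux_setmin_eq
    rw [hset, measure_union ?disj ?meas, hPE4w]
    case disj =>
      rw [Set.disjoint_left]; rintro ω ⟨_, h2⟩ ⟨h3, _⟩; exact absurd h2 (not_lt.mpr h3)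
    case meas =>
      exact (measurableSet_le measurable_const hT₁).inter (measurableSet_le measurable_const hT₂)
  have hE4indep : P E4 = P {ω | τ < T₁ ω} * P {ω | τ < T₂ ω} :=
    hindep.measure_inter_preimage_eq_mul (Set.Ioi τ) (Set.Ioi τ) measurableSet_Ioi measurableSet_Ioi
  have hQ1 : P {ω | T₂ ω < T₁ ω ∧ T₂ ω ∈ Set.Ioc 0 τ} = P E3 := by
    refine (measure_eq_measure_of_null_diff ?_ ?_).symm
    · rintro ω ⟨h1, h2⟩; exact ⟨h1, hpos₂ ω, h2.le⟩
    · refine measure_mono_null ?_ hcont₂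
      rintro ω ⟨⟨h1, _, h3⟩, h4⟩
      simp only [hE3, Set.mem_setOf_eq, not_and, not_lt] at h4
      exact le_antisymm h3 (h4 h1)
  have hQmid : P {ω | T₁ ω = T₂ ω ∧ T₂ ω ∈ Set.Ioc 0 τ} = P E2 := by
    refine (measure_eq_measure_of_null_diff ?_ ?_).symm
    · rintro ω ⟨h1, h2⟩
      refine ⟨h1, hpos₂ ω, ?_⟩
      rw [← h1]; exact h2.le
    · refine measure_mono_null ?_ hcont₂
      rintro ω ⟨⟨h1, _, h3⟩, h4⟩
      simp only [hE2, Set.mem_setOf_eq, not_and, not_lt] at h4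
      exact le_antisymm h3 (h1 ▸ h4 h1)
  have hQ2 : P {ω | T₂ ω ≤ T₁ ω ∧ T₂ ω ∈ Set.Ioc 0 τ}
      = P {ω | T₂ ω < T₁ ω ∧ T₂ ω ∈ Set.Ioc 0 τ} + P E2 := by
    have hset : {ω | T₂ ω ≤ T₁ ω ∧ T₂ ω ∈ Set.Ioc 0 τ}
        = {ω | T₂ ω < T₁ ω ∧ T₂ ω ∈ Set.Ioc 0 τ} ∪ {ω | T₁ ω = T₂ ω ∧ T₂ ω ∈ Set.Ioc 0 τ} := by
      ext ω
      simp only [Set.mem_setOf_eq, Set.mem_union]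
      constructor
      · rintro ⟨h1, h2⟩
        rcases lt_or_eq_of_le h1 with h | h
        · exact Or.inl ⟨h, h2⟩
        · exact Or.inr ⟨h.symm, h2⟩
      · rintro (⟨h1, h2⟩ | ⟨h1, h2⟩)
        · exact ⟨h1.le, h2⟩
        · exact ⟨h1.ge, h2⟩
    rw [hset, measure_union ?disj2 ?meas2, hQmid]
    case disj2 =>
      rw [Set.disjoint_left]; rintro ω ⟨h1, _⟩ ⟨h1', _⟩; exact h1.ne' h1'
    case meas2 =>
      exact (measurableSet_eq_fun hT₁ hT₂).inter (hT₂ measurableSet_Ioc)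
  -- pass to real numbers
  have fin : ∀ s : Set Ω, P s ≠ ⊤ := fun s => measure_ne_top P s
  have hf1 : P E1 + P E2 ≠ ⊤ := ENNReal.add_ne_top.mpr ⟨fin _, fin _⟩
  have hf2 : P E1 + P E2 + P E3 ≠ ⊤ := ENNReal.add_ne_top.mpr ⟨hf1, fin _⟩
  have hsumR : (P E1).toReal + (P E2).toReal + (P E3).toReal + (P E4).toReal = 1 := by
    have h := congrArg ENNReal.toReal hsum
    rwa [ENNReal.toReal_add hf2 (fin _), ENNReal.toReal_add hf1 (fin _),
      ENNReal.toReal_add (fin _) (fin _), ENNReal.toReal_one] at h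
  have hIntR : ∫ t in Set.Ioc (0 : ℝ) τ, (S₁ t + Function.leftLim S₁ t) / 2 ∂μ₂
      = ((P E3).toReal + ((P E3).toReal + (P E2).toReal)) / 2 := by
    rw [hInt, hQ2, hQ1, ENNReal.toReal_div,
      ENNReal.toReal_add (fin _) (ENNReal.add_ne_top.mpr ⟨fin _, fin _⟩),
      ENNReal.toReal_add (fin _) (fin _), ENNReal.toReal_ofNat]
  have hprod : (1 : ℝ) / 2 * S₁ τ * S₂ τ = 1 / 2 * (P E4).toReal := by
    rw [mul_assoc, hS₁ τ, hS₂ τ, ← ENNReal.toReal_mul, ← hE4indep]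
  rw [hA, hB, hIntR, ENNReal.toReal_add (fin _) (fin _), hprod]
  linarith [hsumR]
end

section
/- Self-consistency of the true conditional survival function: Let T be a failure time with conditional survival function S_0(t|X) = P(T > t | X), and let I = (L, R] be an observed interval containing T with censoring conditionally non-informative given X and S_0(L|X) > S_0(R|X) almost surely. Then for every t >= 0, E[ S_0(t | X, I) | X ] = S_0(t | X) almost surely, where S_0(t|X,I) = min{max{(S_0(t|X)-S_0(R|X))/(S_0(L|X)-S_0(R|X)), 0}, 1} is the full-conditional survival function. -/
open MeasureTheory ProbabilityTheory Set Function

/-- `S(r|x)` for a possibly infinite time `r ∈ (0,∞]`: for `r = ∞` the survival probability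
of a finite failure time is `0`. -/
noncomputable def survValE {𝒳 : Type*} (S : ℝ → 𝒳 → ℝ) (r : EReal) (x : 𝒳) : ℝ :=
  if r = ⊤ then 0 else S r.toReal x

/-- The full-conditional survival function
`S(t | (l,r], x) = min (max ((S(t|x) - S(r|x)) / (S(l|x) - S(r|x))) 0) 1`. -/
noncomputable def fullCond {𝒳 : Type*} (S : ℝ → 𝒳 → ℝ) (x : 𝒳) (l : ℝ) (r : EReal) (t : ℝ) : ℝ :=
  min (max ((S t x - survValE S r x) / (S l x - survValE S r x)) 0) 1

/-- **Self-consistency of the true conditional survival function.**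
`T` is a failure time with conditional survival function `S₀(t|X)` (a version of
`P(T > t ∣ X)`), and `I = (L, R]` is an observed interval containing `T` (the right endpoint
may be `∞`, hence lives in `EReal`), with `S₀(L|X) > S₀(R|X)` almost surely.  Conditionally
non-informative censoring is expressed by requiring that the full-conditional survival function
`S₀(t|X,I)` is a version of `P(T > t ∣ X, L, R)`.  Then for every `t ≥ 0`,
`E[S₀(t|X,I) ∣ X] = S₀(t|X)` almost surely. -/
theorem self_consistency_of_true_conditional_survival
    {Ω 𝒳 : Type*} [MeasurableSpace Ω] [MeasurableSpace 𝒳]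
    (P : Measure Ω) [IsProbabilityMeasure P]
    (X : Ω → 𝒳) (T L : Ω → ℝ) (R : Ω → EReal)
    (hX : Measurable X) (hT : Measurable T) (hL : Measurable L) (hR : Measurable R)
    (hTpos : ∀ ω, 0 < T ω)
    (S₀ : ℝ → 𝒳 → ℝ)
    (hS₀meas : ∀ t, Measurable (S₀ t))
    -- `S₀(t|·)` is a version of the conditional survival function of `T` given `X`:
    (hS₀ : ∀ t : ℝ, (fun ω => S₀ t (X ω))
      =ᵐ[P] P[Set.indicator {ω | t < T ω} (fun _ => (1 : ℝ)) |
              MeasurableSpace.comap X inferInstance])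
    -- the observed interval contains the failure time: `L < T ≤ R` a.s.:
    (hobs : ∀ᵐ ω ∂P, L ω < T ω ∧ (T ω : EReal) ≤ R ω)
    (hLnn : ∀ᵐ ω ∂P, 0 ≤ L ω)
    -- `S₀(L|X) > S₀(R|X)` a.s.:
    (hgap : ∀ᵐ ω ∂P, survValE S₀ (R ω) (X ω) < S₀ (L ω) (X ω))
    -- conditionally non-informative censoring: `P(T > t ∣ X, L, R) = S₀(t | X, (L,R])` a.s.:
    (hNI : ∀ t : ℝ, P[Set.indicator {ω | t < T ω} (fun _ => (1 : ℝ)) |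
              MeasurableSpace.comap (fun ω => (X ω, L ω, R ω)) inferInstance]
      =ᵐ[P] fun ω => fullCond S₀ (X ω) (L ω) (R ω) t) :
    ∀ t : ℝ, 0 ≤ t →
      P[(fun ω => fullCond S₀ (X ω) (L ω) (R ω) t) | MeasurableSpace.comap X inferInstance]
        =ᵐ[P] fun ω => S₀ t (X ω) := by
  intro t _
  have hle : MeasurableSpace.comap X inferInstance ≤
      MeasurableSpace.comap (fun ω => (X ω, L ω, R ω)) inferInstance := by
    have : X = (fun p : 𝒳 × ℝ × EReal => p.1) ∘ fun ω => (X ω, L ω, R ω) := rfl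
    rw [this, ← MeasurableSpace.comap_comp]
    exact MeasurableSpace.comap_mono (measurable_fst.comap_le)
  have hle2 : MeasurableSpace.comap (fun ω => (X ω, L ω, R ω)) inferInstance ≤
      (inferInstance : MeasurableSpace Ω) :=
    ((hX.prodMk (hL.prodMk hR)).comap_le)
  calc P[(fun ω => fullCond S₀ (X ω) (L ω) (R ω) t) | MeasurableSpace.comap X inferInstance]
      =ᵐ[P] P[P[Set.indicator {ω | t < T ω} (fun _ => (1 : ℝ)) |
              MeasurableSpace.comap (fun ω => (X ω, L ω, R ω)) inferInstance] |
              MeasurableSpace.comap X inferInstance] :=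
        condExp_congr_ae (hNI t).symm
    _ =ᵐ[P] P[Set.indicator {ω | t < T ω} (fun _ => (1 : ℝ)) |
              MeasurableSpace.comap X inferInstance] :=
        condExp_condExp_of_le hle hle2
    _ =ᵐ[P] fun ω => S₀ t (X ω) := (hS₀ t).symm
end

section
/- Conditional uniformity of the survival transform given an interval: Let T be a random variable with values in (0, infinity) whose survival function S is continuous, and let 0 <= l < r <= infinity with S(l) > S(r). Then, conditionally on the event {l < T <= r}, the random variable S(T) is uniformly distributed on the interval [S(r), S(l)). -/
/-! Continuity of `S` makes `{t | x ≤ S t}` a closed half-line `(-∞, c]` with `S c = x` whenever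
`S r < x ≤ S l` (it is bounded above because `S t → 0` as `t → ∞`). Hence the event
`{l < T ≤ r, x ≤ S T}` is `{l < T ≤ c}`, of probability `S l - x`: these are the upper tails of
Lebesgue measure on `[S r, S l)`, and `P(l < T ≤ r) = S l - S r` normalizes them. -/

open MeasureTheory ProbabilityTheory Set Filter Topology

theorem Antitone.exists_eq_and_le_iff_le {α δ : Type*} [ConditionallyCompleteLinearOrder α]
    [TopologicalSpace α] [OrderTopology α] [DenselyOrdered α] [LinearOrder δ] [TopologicalSpace δ]
    [OrderClosedTopology δ] {f : α → δ} (hf : Antitone f) (hc : Continuous f) {a b : α} {x : δ}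
    (ha : x ≤ f a) (hb : f b < x) : ∃ c, f c = x ∧ ∀ t, x ≤ f t ↔ t ≤ c := by
  set A : Set α := {t | x ≤ f t}
  have hA_le : ∀ t ∈ A, t ≤ b := fun t ht ↦
    not_lt.1 fun hbt ↦ (hb.trans_le ht).not_ge (hf hbt.le)
  have hcA : sSup A ∈ A := (isClosed_le continuous_const hc).csSup_mem ⟨a, ha⟩ ⟨b, hA_le⟩
  have hle_iff : ∀ t, x ≤ f t ↔ t ≤ sSup A := fun t ↦
    ⟨fun ht ↦ le_csSup ⟨b, hA_le⟩ ht, fun ht ↦ hcA.trans (hf ht)⟩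
  refine ⟨sSup A, le_antisymm ?_ hcA, hle_iff⟩
  obtain ⟨d, hd, hfd⟩ := intermediate_value_Icc' (csSup_le ⟨a, ha⟩ hA_le) hc.continuousOn
    ⟨hb.le, hcA⟩
  rw [le_antisymm hd.1 ((hle_iff d).1 hfd.ge), hfd]

section Survival

variable {Ω : Type*} [MeasurableSpace Ω]

def survivalFun (P : Measure Ω) (T : Ω → ℝ) (t : ℝ) : ℝ := (P {ω | t < T ω}).toReal

variable {P : Measure Ω} [IsFiniteMeasure P] {T : Ω → ℝ}

theorem ofReal_survivalFun (t : ℝ) :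
    ENNReal.ofReal (survivalFun P T t) = P {ω | t < T ω} :=
  ENNReal.ofReal_toReal (measure_ne_top _ _)

theorem antitone_survivalFun : Antitone (survivalFun P T) := fun _ _ hst ↦
  ENNReal.toReal_mono (measure_ne_top _ _) (measure_mono fun _ hω ↦ hst.trans_lt hω)

theorem tendsto_survivalFun_atTop (hT : Measurable T) :
    Tendsto (survivalFun P T) atTop (𝓝 0) := by
  have h := tendsto_measure_iInter_atTop (μ := P) (s := fun t : ℝ ↦ {ω | t < T ω})
    (fun _ ↦ (measurableSet_lt measurable_const hT).nullMeasurableSet)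
    (fun _ _ hst _ hω ↦ hst.trans_lt hω) ⟨0, measure_ne_top _ _⟩
  rw [iInter_eq_empty_iff.2 fun ω ↦ ⟨T ω, lt_irrefl (T ω)⟩, measure_empty] at h
  exact (ENNReal.tendsto_toReal ENNReal.zero_ne_top).comp h

theorem exists_survivalFun_eq_and_le_iff (hT : Measurable T) (hS : Continuous (survivalFun P T))
    {a x : ℝ} (hx : 0 < x) (hxa : x ≤ survivalFun P T a) :
    ∃ c, survivalFun P T c = x ∧ ∀ t, x ≤ survivalFun P T t ↔ t ≤ c :=
  let ⟨_, hb⟩ := ((tendsto_order.1 (tendsto_survivalFun_atTop hT)).2 x hx).exists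
  antitone_survivalFun.exists_eq_and_le_iff_le hS hxa hb

variable {l : ℝ} {r : EReal}

theorem measure_Ioc_event (hT : Measurable T) (hlr : (l : EReal) ≤ r) :
    P {ω | l < T ω ∧ (T ω : EReal) ≤ r} =
      ENNReal.ofReal (survivalFun P T l - (P {ω | r < (T ω : EReal)}).toReal) := by
  have hsub : {ω | r < (T ω : EReal)} ⊆ {ω | l < T ω} := fun _ hω ↦
    EReal.coe_lt_coe_iff.1 (hlr.trans_lt hω)
  have hdiff : {ω | l < T ω ∧ (T ω : EReal) ≤ r} = {ω | l < T ω} \ {ω | r < (T ω : EReal)} := by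
    ext; simp [not_lt]
  rw [hdiff, measure_sdiff hsub (measurableSet_lt measurable_const
      (measurable_coe_real_ereal.comp hT)).nullMeasurableSet (measure_ne_top _ _),
    ← ofReal_survivalFun, ENNReal.ofReal_sub _ ENNReal.toReal_nonneg,
    ENNReal.ofReal_toReal (measure_ne_top _ _)]

theorem measure_Ioc_event_inter_le_survivalFun (hT : Measurable T)
    (hS : Continuous (survivalFun P T)) (hlr : (l : EReal) ≤ r) (x : ℝ) :
    P ({ω | l < T ω ∧ (T ω : EReal) ≤ r} ∩ {ω | x ≤ survivalFun P T (T ω)}) =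
      ENNReal.ofReal (survivalFun P T l - max x (P {ω | r < (T ω : EReal)}).toReal) := by
  set Sr := (P {ω | r < (T ω : EReal)}).toReal
  have hSr_le : ∀ t : ℝ, (t : EReal) ≤ r → Sr ≤ survivalFun P T t := fun _ ht ↦
    ENNReal.toReal_mono (measure_ne_top _ _) <|
      measure_mono fun _ hω ↦ EReal.coe_lt_coe_iff.1 (ht.trans_lt hω)
  have hle_Sr : ∀ t : ℝ, r < t → survivalFun P T t ≤ Sr := fun _ ht ↦
    ENNReal.toReal_mono (measure_ne_top _ _) <|
      measure_mono fun _ hω ↦ ht.trans (EReal.coe_lt_coe_iff.2 hω)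
  rcases le_or_gt x Sr with hxSr | hSrx
  · have hsub : {ω | l < T ω ∧ (T ω : EReal) ≤ r} ⊆ {ω | x ≤ survivalFun P T (T ω)} :=
      fun _ hω ↦ hxSr.trans (hSr_le _ hω.2)
    rw [inter_eq_left.2 hsub, max_eq_right hxSr, measure_Ioc_event hT hlr]
  rcases le_or_gt x (survivalFun P T l) with hxl | hlx
  · obtain ⟨c, hc, hle_iff⟩ :=
      exists_survivalFun_eq_and_le_iff hT hS (ENNReal.toReal_nonneg.trans_lt hSrx) hxl
    have hsub : {ω | c < T ω} ⊆ {ω | l < T ω} := fun _ hω ↦ ((hle_iff l).1 hxl).trans_lt hω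
    have hdiff : {ω | l < T ω ∧ (T ω : EReal) ≤ r} ∩ {ω | x ≤ survivalFun P T (T ω)} =
        {ω | l < T ω} \ {ω | c < T ω} := by
      ext ω
      simp only [mem_inter_iff, Set.mem_sdiff, mem_ofPred_eq, not_lt, hle_iff]
      refine ⟨fun h ↦ ⟨h.1.1, h.2⟩, fun h ↦ ⟨⟨h.1, not_lt.1 fun hr ↦ ?_⟩, h.2⟩⟩
      exact (hle_Sr _ hr).not_gt (hSrx.trans_le ((hle_iff _).2 h.2))
    rw [hdiff, measure_sdiff hsub (measurableSet_lt measurable_const hT).nullMeasurableSet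
        (measure_ne_top _ _), ← ofReal_survivalFun, ← ofReal_survivalFun,
      hc, max_eq_left hSrx.le, ENNReal.ofReal_sub _ (ENNReal.toReal_nonneg.trans hSrx.le)]
  · have hempty : {ω | l < T ω ∧ (T ω : EReal) ≤ r} ∩ {ω | x ≤ survivalFun P T (T ω)} = ∅ :=
      eq_empty_of_forall_notMem fun ω hω ↦
        (antitone_survivalFun hω.1.1.le).not_gt (hlx.trans_le hω.2)
    rw [hempty, measure_empty, eq_comm, ENNReal.ofReal_eq_zero, sub_nonpos]
    exact hlx.le.trans (le_max_left _ _)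

end Survival

theorem conditional_uniformity_of_survival_transform_general
    {Ω : Type*} [MeasurableSpace Ω] (P : Measure Ω) [IsProbabilityMeasure P]
    (T : Ω → ℝ) (hT : Measurable T)
    (S : ℝ → ℝ) (hS : ∀ t, S t = (P {ω | t < T ω}).toReal) (hScont : Continuous S)
    (l : ℝ) (r : EReal) (hlr : (l : EReal) < r)
    (Sr : ℝ) (hSr : Sr = (P {ω | r < (T ω : EReal)}).toReal) :
    Measure.map (fun ω => S (T ω)) (P[|{ω | l < T ω ∧ (T ω : EReal) ≤ r}])
      = (ENNReal.ofReal (S l - Sr))⁻¹ • volume.restrict (Set.Ico Sr (S l)) := by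
  obtain rfl : S = survivalFun P T := funext hS
  subst hSr
  have hE : MeasurableSet {ω | l < T ω ∧ (T ω : EReal) ≤ r} :=
    (measurableSet_lt measurable_const hT).inter
      (measurableSet_le (measurable_coe_real_ereal.comp hT) measurable_const)
  have hIci_inter_Ico : ∀ x a b : ℝ, Ici x ∩ Ico a b = Ico (max x a) b := fun _ _ _ ↦ by
    ext; simp [and_assoc]
  refine Measure.ext_of_Ici _ _ fun x ↦ ?_
  rw [Measure.map_apply (f := fun ω ↦ survivalFun P T (T ω)) (hScont.measurable.comp hT)
      measurableSet_Ici, cond_apply hE,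
    Measure.smul_apply, Measure.restrict_apply measurableSet_Ici, hIci_inter_Ico,
    Real.volume_Ico, smul_eq_mul, measure_Ioc_event hT hlr.le]
  exact congrArg _ (measure_Ioc_event_inter_le_survivalFun hT hScont hlr.le x)

/-- **Conditional uniformity of the survival transform given an interval.**
`T` is a random variable with values in `(0,∞)` whose survival function `S` is continuous;
`0 ≤ l < r ≤ ∞` (the possibly infinite right endpoint `r` lives in `EReal`, `Sr = P(T > r)`,
which is `0` if `r = ∞`) and `S(l) > S(r)`.  Then, conditionally on `{l < T ≤ r}`,
the random variable `S(T)` is uniformly distributed on `[S(r), S(l))`: its conditional law is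
Lebesgue measure restricted to `Ico (S r) (S l)` normalized by `(S l - S r)⁻¹`. -/
theorem conditional_uniformity_of_survival_transform
    {Ω : Type*} [MeasurableSpace Ω] (P : Measure Ω) [IsProbabilityMeasure P]
    (T : Ω → ℝ) (hT : Measurable T) (hpos : ∀ ω, 0 < T ω)
    (S : ℝ → ℝ) (hS : ∀ t, S t = (P {ω | t < T ω}).toReal) (hScont : Continuous S)
    (l : ℝ) (r : EReal) (hl : 0 ≤ l) (hlr : (l : EReal) < r)
    (Sr : ℝ) (hSr : Sr = (P {ω | r < (T ω : EReal)}).toReal)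
    (hgap : Sr < S l) :
    Measure.map (fun ω => S (T ω)) (P[|{ω | l < T ω ∧ (T ω : EReal) ≤ r}])
      = (ENNReal.ofReal (S l - Sr))⁻¹ • volume.restrict (Set.Ico Sr (S l)) :=
  conditional_uniformity_of_survival_transform_general P T hT S hS hScont l r hlr Sr hSr
end

section
/- Continuity of the bilinear Stieltjes pairing under uniform convergence: Let tau > 0. Let f_n, f : [0, tau] -> [0, 1] be measurable functions with f continuous, and sup over [0,tau] of |f_n - f| -> 0. Let g_n, g : [0, tau] -> [0, 1] be nonincreasing right-continuous functions with g continuous and sup over [0,tau] of |g_n - g| -> 0. Then the Lebesgue–Stieltjes integrals converge: integral over (0, tau] of f_n dg_n -> integral over (0, tau] of f dg as n -> infinity. -/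
/-!
Cut `(0, τ]` into finitely many intervals on which `f₀` oscillates by less than `η`, and
replace the integrands on each piece by the value of `f₀` at its right endpoint. The error
is at most `(sup |fₙ - f₀| + η)` times the total mass, which is `g(0) - g(τ) ≤ 1`. The
resulting Riemann–Stieltjes sums involve only the masses `gₙ(pᵢ) - gₙ(pᵢ₊₁)` of the pieces,
and these converge because `gₙ → g₀` pointwise.
-/

open MeasureTheory Filter Set Function Topology
open scoped NNReal ENNReal

theorem tendsto_of_forall_approx {ι α : Type*} [PseudoMetricSpace α] {l : Filter ι}
    {x : ι → α} {x₀ : α}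
    (h : ∀ ε > 0, ∃ (y : ι → α) (y₀ : α), Tendsto y l (𝓝 y₀) ∧
      (∀ᶠ i in l, dist (x i) (y i) ≤ ε) ∧ dist x₀ y₀ ≤ ε) :
    Tendsto x l (𝓝 x₀) := by
  refine Metric.tendsto_nhds.2 fun ε hε => ?_
  obtain ⟨y, y₀, hy, hxy, hx₀y₀⟩ := h (ε / 3) (by positivity)
  filter_upwards [hxy, Metric.tendsto_nhds.1 hy (ε / 3) (by positivity)] with i hxyi hyi
  calc dist (x i) x₀ ≤ dist (x i) (y i) + dist (y i) y₀ + dist y₀ x₀ := dist_triangle4 _ _ _ _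
    _ < ε := by rw [dist_comm y₀]; linarith

theorem bddAbove_range_abs_sub_of_mem_Icc {α : Type*} {s : Set α} {F G : α → ℝ} {m M : ℝ}
    (hF : ∀ t ∈ s, F t ∈ Icc m M) (hG : ∀ t ∈ s, G t ∈ Icc m M) :
    BddAbove (range fun t : s => |F t - G t|) :=
  ⟨M - m, forall_mem_range.2 fun t => abs_sub_le_iff.2
    ⟨by linarith [(hF t t.2).2, (hG t t.2).1], by linarith [(hF t t.2).1, (hG t t.2).2]⟩⟩

theorem tendstoUniformlyOn_of_tendsto_iSup_abs_sub {ι α : Type*} {l : Filter ι} {s : Set α}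
    {F : ι → α → ℝ} {F₀ : α → ℝ} (hbdd : ∀ i, BddAbove (range fun t : s => |F i t - F₀ t|))
    (h : Tendsto (fun i => ⨆ t : s, |F i t - F₀ t|) l (𝓝 0)) :
    TendstoUniformlyOn F F₀ l s := by
  refine Metric.tendstoUniformlyOn_iff.2 fun ε hε =>
    (h.eventually (gt_mem_nhds hε)).mono fun i hi t ht => ?_
  rw [dist_comm, Real.dist_eq]
  exact (le_ciSup (hbdd i) ⟨t, ht⟩).trans_lt hi

theorem Monotone.biUnion_range_Ioc {α : Type*} [LinearOrder α] {p : ℕ → α} (hp : Monotone p)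
    (N : ℕ) : ⋃ i ∈ Finset.range N, Ioc (p i) (p (i + 1)) = Ioc (p 0) (p N) :=
  (iUnion₂_subset fun i (hi : i ∈ Finset.range N) => Ioc_subset_Ioc (hp (Nat.zero_le i))
    (hp (Finset.mem_range.1 hi))).antisymm (Ioc_subset_biUnion_Ioc N p)

theorem exists_monotone_partition_sub_lt {a b δ : ℝ} (hab : a ≤ b) (hδ : 0 < δ) :
    ∃ (N : ℕ) (p : ℕ → ℝ), Monotone p ∧ p 0 = a ∧ p N = b ∧ ∀ i, p (i + 1) - p i < δ := by
  obtain ⟨N, hN⟩ := exists_nat_gt ((b - a) / δ)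
  have hN0 : (0 : ℝ) < N := (div_nonneg (sub_nonneg.2 hab) hδ.le).trans_lt hN
  have hstep : 0 ≤ (b - a) / N := div_nonneg (sub_nonneg.2 hab) hN0.le
  refine ⟨N, fun i => a + i * ((b - a) / N), fun i j hij => ?_, by simp, by field_simp; ring,
    fun i => ?_⟩
  · dsimp only
    gcongr
  · rw [div_lt_iff₀ hδ] at hN
    rw [add_sub_add_left_eq_sub, ← sub_mul, Nat.cast_succ, add_sub_cancel_left, one_mul,
      div_lt_iff₀ hN0]
    linarith

theorem abs_setIntegral_sub_mul_measureReal_le {α : Type*} [MeasurableSpace α] {μ : Measure α}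
    {s : Set α} {F : α → ℝ} {c C : ℝ} (hs : μ s ≠ ∞) (hF : IntegrableOn F s μ)
    (hC : ∀ t ∈ s, |F t - c| ≤ C) :
    |∫ t in s, F t ∂μ - c * μ.real s| ≤ C * μ.real s := by
  have : IsFiniteMeasure (μ.restrict s) := isFiniteMeasure_restrict.2 hs
  rw [mul_comm, ← smul_eq_mul, ← setIntegral_const, ← integral_sub hF (integrable_const c)]
  exact norm_setIntegral_le_of_norm_le_const hs.lt_top fun t ht =>
    (Real.norm_eq_abs _).trans_le (hC t ht)

theorem abs_setIntegral_biUnion_sub_sum_le {α ι : Type*} [MeasurableSpace α] {μ : Measure α}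
    {s : Finset ι} {A : ι → Set α} {F : α → ℝ} {c : ι → ℝ} {C : ℝ}
    (hA : ∀ i ∈ s, MeasurableSet (A i)) (hdisj : PairwiseDisjoint ↑s A)
    (hfin : ∀ i ∈ s, μ (A i) ≠ ∞) (hF : IntegrableOn F (⋃ i ∈ s, A i) μ)
    (hC : ∀ i ∈ s, ∀ t ∈ A i, |F t - c i| ≤ C) :
    |∫ t in ⋃ i ∈ s, A i, F t ∂μ - ∑ i ∈ s, c i * μ.real (A i)|
      ≤ C * μ.real (⋃ i ∈ s, A i) := by
  have hFA : ∀ i ∈ s, IntegrableOn F (A i) μ := fun i hi =>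
    hF.mono_set (subset_biUnion_of_mem (u := A) hi)
  rw [integral_biUnion_finset s hA hdisj hFA, measureReal_biUnion_finset hdisj hA hfin,
    Finset.mul_sum, ← Finset.sum_sub_distrib]
  exact (Finset.abs_sum_le_sum_abs _ _).trans (Finset.sum_le_sum fun i hi =>
    abs_setIntegral_sub_mul_measureReal_le (hfin i hi) (hFA i hi) (hC i hi))

theorem abs_setIntegral_Ioc_sub_sum_le {μ : Measure ℝ} {p : ℕ → ℝ} (hp : Monotone p) {N : ℕ}
    {F : ℝ → ℝ} {c : ℕ → ℝ} {C : ℝ} (hμ : μ (Ioc (p 0) (p N)) ≠ ∞)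
    (hF : IntegrableOn F (Ioc (p 0) (p N)) μ)
    (hC : ∀ i < N, ∀ t ∈ Ioc (p i) (p (i + 1)), |F t - c i| ≤ C) :
    |∫ t in Ioc (p 0) (p N), F t ∂μ - ∑ i ∈ Finset.range N, c i * μ.real (Ioc (p i) (p (i + 1)))|
      ≤ C * μ.real (Ioc (p 0) (p N)) := by
  rw [← hp.biUnion_range_Ioc] at hμ hF ⊢
  refine abs_setIntegral_biUnion_sub_sum_le (fun _ _ => measurableSet_Ioc)
    (hp.pairwise_disjoint_on_Ioc_succ.set_pairwise _) (fun i hi => ?_) hF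
    (fun i hi => hC i (Finset.mem_range.1 hi))
  exact measure_ne_top_of_subset
    (subset_biUnion_of_mem (u := fun i => Ioc (p i) (p (i + 1))) hi) hμ

theorem integrableOn_of_forall_mem_Icc {α : Type*} [MeasurableSpace α] {ν : Measure α}
    {s : Set α} {F : α → ℝ} {m M : ℝ} (hs : MeasurableSet s) (hν : ν s ≠ ∞)
    (hFm : AEStronglyMeasurable F (ν.restrict s)) (hF : ∀ t ∈ s, F t ∈ Icc m M) :
    IntegrableOn F s ν :=
  IntegrableOn.of_bound hν.lt_top hFm (max |m| |M|)
    (ae_restrict_of_forall_mem hs fun t ht => abs_le_max_abs_abs (hF t ht).1 (hF t ht).2)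

theorem tendsto_measureReal_of_eq_ofReal {α ι : Type*} [MeasurableSpace α] {l : Filter ι}
    {ν : ι → Measure α} {ν₀ : Measure α} {s : Set α} {u : ι → ℝ} {u₀ : ℝ}
    (h : ∀ i, ν i s = ENNReal.ofReal (u i)) (h₀ : ν₀ s = ENNReal.ofReal u₀)
    (hu : Tendsto u l (𝓝 u₀)) :
    Tendsto (fun i => (ν i).real s) l (𝓝 (ν₀.real s)) := by
  simp only [measureReal_def, h, h₀]
  exact (ENNReal.tendsto_toReal ENNReal.ofReal_ne_top).comp (ENNReal.tendsto_ofReal hu)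

-- Sample at right endpoints: the left endpoint `a` lies outside `Ioc a b`.
theorem UniformContinuousOn.exists_partition_Ioc_abs_sub_le {F : ℝ → ℝ} {a b η : ℝ}
    (hF : UniformContinuousOn F (Ioc a b)) (hab : a ≤ b) (hη : 0 < η) :
    ∃ (N : ℕ) (p : ℕ → ℝ), Monotone p ∧ p 0 = a ∧ p N = b ∧
      ∀ i < N, ∀ t ∈ Ioc (p i) (p (i + 1)), |F t - F (p (i + 1))| ≤ η := by
  obtain ⟨δ, hδ, hFδ⟩ := Metric.uniformContinuousOn_iff.1 hF η hη
  obtain ⟨N, p, hp, rfl, rfl, hpδ⟩ := exists_monotone_partition_sub_lt hab hδ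
  refine ⟨N, p, hp, rfl, rfl, fun i hi t ht => ?_⟩
  have hpN : p (i + 1) ≤ p N := hp (Nat.succ_le_of_lt hi)
  have ht' : t ∈ Ioc (p 0) (p N) := ⟨(hp (Nat.zero_le i)).trans_lt ht.1, ht.2.trans hpN⟩
  have hdist : dist t (p (i + 1)) < δ := by
    rw [dist_comm, Real.dist_eq, abs_of_nonneg (sub_nonneg.2 ht.2)]
    linarith [hpδ i, ht.1]
  exact (hFδ t ht' _ ⟨ht'.1.trans_le ht.2, hpN⟩ hdist).le

theorem tendsto_setIntegral_Ioc_of_tendstoUniformlyOn {a b : ℝ} {M : ℝ≥0} {F : ℕ → ℝ → ℝ}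
    {F₀ : ℝ → ℝ} {ν : ℕ → Measure ℝ} {ν₀ : Measure ℝ} (hab : a ≤ b)
    (hF : TendstoUniformlyOn F F₀ atTop (Ioc a b)) (hF₀ : UniformContinuousOn F₀ (Ioc a b))
    (hFint : ∀ n, IntegrableOn (F n) (Ioc a b) (ν n)) (hF₀int : IntegrableOn F₀ (Ioc a b) ν₀)
    (hν : ∀ x y, a ≤ x → x ≤ y → y ≤ b →
      Tendsto (fun n => (ν n).real (Ioc x y)) atTop (𝓝 (ν₀.real (Ioc x y))))
    (hνM : ∀ n, ν n (Ioc a b) ≤ M) (hν₀M : ν₀ (Ioc a b) ≤ M) :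
    Tendsto (fun n => ∫ t in Ioc a b, F n t ∂ν n) atTop (𝓝 (∫ t in Ioc a b, F₀ t ∂ν₀)) := by
  refine tendsto_of_forall_approx fun ε hε => ?_
  set η := ε / (2 * (M + 1)) with hη_def
  have hη : 0 < η := by positivity
  have hM : (η + η) * (M + 1) = ε := by rw [hη_def]; field_simp; ring
  have hmass : ∀ μ : Measure ℝ, μ (Ioc a b) ≤ M → μ.real (Ioc a b) ≤ M + 1 :=
    fun μ hμ => (ENNReal.toReal_le_coe_of_le_coe hμ).trans (le_add_of_nonneg_right zero_le_one)
  obtain ⟨N, p, hp, rfl, rfl, hosc⟩ := hF₀.exists_partition_Ioc_abs_sub_le hab hη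
  have hsub : ∀ i < N, Ioc (p i) (p (i + 1)) ⊆ Ioc (p 0) (p N) := fun i hi =>
    Ioc_subset_Ioc (hp (Nat.zero_le i)) (hp (Nat.succ_le_of_lt hi))
  let R : Measure ℝ → ℝ := fun μ =>
    ∑ i ∈ Finset.range N, F₀ (p (i + 1)) * μ.real (Ioc (p i) (p (i + 1)))
  refine ⟨fun n => R (ν n), R ν₀, tendsto_finsetSum _ fun i hi => ?_, ?_, ?_⟩
  · have hi := Finset.mem_range.1 hi
    exact ((hν _ _ (hp (Nat.zero_le i)) (hp (Nat.le_succ i))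
      (hp (Nat.succ_le_of_lt hi))).const_mul _)
  · filter_upwards [Metric.tendstoUniformlyOn_iff.1 hF η hη] with n hn
    rw [Real.dist_eq]
    calc _ ≤ (η + η) * (ν n).real (Ioc (p 0) (p N)) := by
          refine abs_setIntegral_Ioc_sub_sum_le hp
            (ne_top_of_le_ne_top ENNReal.coe_ne_top (hνM n)) (hFint n) fun i hi t ht => ?_
          calc |F n t - F₀ (p (i + 1))| ≤ |F n t - F₀ t| + |F₀ t - F₀ (p (i + 1))| :=
                abs_sub_le _ _ _
            _ ≤ η + η := by
                gcongr
                · rw [← Real.dist_eq, dist_comm]; exact (hn t (hsub i hi ht)).le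
                · exact hosc i hi t ht
      _ ≤ (η + η) * (M + 1) := by gcongr; exact hmass _ (hνM n)
      _ = ε := hM
  · rw [Real.dist_eq]
    calc _ ≤ η * ν₀.real (Ioc (p 0) (p N)) :=
          abs_setIntegral_Ioc_sub_sum_le hp (ne_top_of_le_ne_top ENNReal.coe_ne_top hν₀M)
            hF₀int hosc
      _ ≤ (η + η) * (M + 1) :=
          mul_le_mul (by linarith) (hmass _ hν₀M) measureReal_nonneg (by positivity)
      _ = ε := hM

/-- `μ n` is the measure `-d(g n)`, so that `∫ f dg = -∫ f ∂μ`. -/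
theorem stieltjes_pairing_continuity_general
    (τ : ℝ) (hτ : 0 < τ)
    (f : ℕ → ℝ → ℝ) (f₀ : ℝ → ℝ)
    (hfmeas : ∀ n, Measurable (f n))
    (hfrange : ∀ n, ∀ t ∈ Set.Icc 0 τ, f n t ∈ Set.Icc (0 : ℝ) 1)
    (hf₀range : ∀ t ∈ Set.Icc 0 τ, f₀ t ∈ Set.Icc (0 : ℝ) 1)
    (hf₀cont : ContinuousOn f₀ (Set.Icc 0 τ))
    (hfconv : Tendsto (fun n => ⨆ t : Set.Icc (0 : ℝ) τ, |f n t - f₀ t|) atTop (𝓝 0))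
    (g : ℕ → ℝ → ℝ) (g₀ : ℝ → ℝ)
    (hgrange : ∀ n, ∀ t ∈ Set.Icc 0 τ, g n t ∈ Set.Icc (0 : ℝ) 1)
    (hg₀range : ∀ t ∈ Set.Icc 0 τ, g₀ t ∈ Set.Icc (0 : ℝ) 1)
    (hgconv : Tendsto (fun n => ⨆ t : Set.Icc (0 : ℝ) τ, |g n t - g₀ t|) atTop (𝓝 0))
    (μ : ℕ → Measure ℝ) (μ₀ : Measure ℝ)
    (hμ : ∀ n, ∀ a b : ℝ, a ∈ Set.Icc 0 τ → b ∈ Set.Icc 0 τ → a ≤ b →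
      μ n (Set.Ioc a b) = ENNReal.ofReal (g n a - g n b))
    (hμ₀ : ∀ a b : ℝ, a ∈ Set.Icc 0 τ → b ∈ Set.Icc 0 τ → a ≤ b →
      μ₀ (Set.Ioc a b) = ENNReal.ofReal (g₀ a - g₀ b)) :
    Tendsto (fun n => -∫ t in Set.Ioc (0 : ℝ) τ, f n t ∂(μ n)) atTop
      (𝓝 (-∫ t in Set.Ioc (0 : ℝ) τ, f₀ t ∂μ₀)) := by
  have h0I : (0 : ℝ) ∈ Icc 0 τ := left_mem_Icc.2 hτ.le
  have hτI : τ ∈ Icc 0 τ := right_mem_Icc.2 hτ.le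
  have hfu : TendstoUniformlyOn f f₀ atTop (Icc 0 τ) := tendstoUniformlyOn_of_tendsto_iSup_abs_sub
    (fun n => bddAbove_range_abs_sub_of_mem_Icc (hfrange n) hf₀range) hfconv
  have hgu : TendstoUniformlyOn g g₀ atTop (Icc 0 τ) := tendstoUniformlyOn_of_tendsto_iSup_abs_sub
    (fun n => bddAbove_range_abs_sub_of_mem_Icc (hgrange n) hg₀range) hgconv
  have hmass : ∀ x y, 0 ≤ x → x ≤ y → y ≤ τ →
      Tendsto (fun n => (μ n).real (Ioc x y)) atTop (𝓝 (μ₀.real (Ioc x y))) := by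
    intro x y hx hxy hy
    have hxI : x ∈ Icc 0 τ := ⟨hx, hxy.trans hy⟩
    have hyI : y ∈ Icc 0 τ := ⟨hx.trans hxy, hy⟩
    exact tendsto_measureReal_of_eq_ofReal (fun n => hμ n x y hxI hyI hxy) (hμ₀ x y hxI hyI hxy)
      ((hgu.tendsto_at hxI).sub (hgu.tendsto_at hyI))
  have hmass_le_one : ∀ G : ℝ → ℝ, (∀ t ∈ Icc 0 τ, G t ∈ Icc (0 : ℝ) 1) →
      ENNReal.ofReal (G 0 - G τ) ≤ ((1 : ℝ≥0) : ℝ≥0∞) := fun G hG =>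
    ENNReal.ofReal_le_one.2 (by linarith [(hG 0 h0I).2, (hG τ hτI).1])
  have hμ_le : ∀ n, μ n (Ioc 0 τ) ≤ ((1 : ℝ≥0) : ℝ≥0∞) := fun n =>
    (hμ n 0 τ h0I hτI hτ.le).trans_le (hmass_le_one _ (hgrange n))
  have hμ₀_le : μ₀ (Ioc 0 τ) ≤ ((1 : ℝ≥0) : ℝ≥0∞) :=
    (hμ₀ 0 τ h0I hτI hτ.le).trans_le (hmass_le_one _ hg₀range)
  have hint : ∀ (ν : Measure ℝ) (G : ℝ → ℝ), ν (Ioc 0 τ) ≤ ((1 : ℝ≥0) : ℝ≥0∞) →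
      AEStronglyMeasurable G (ν.restrict (Ioc 0 τ)) → (∀ t ∈ Icc 0 τ, G t ∈ Icc (0 : ℝ) 1) →
      IntegrableOn G (Ioc 0 τ) ν := fun ν G hν hGm hG =>
    integrableOn_of_forall_mem_Icc measurableSet_Ioc (ne_top_of_le_ne_top ENNReal.coe_ne_top hν)
      hGm fun t ht => hG t (Ioc_subset_Icc_self ht)
  exact (tendsto_setIntegral_Ioc_of_tendstoUniformlyOn hτ.le (hfu.mono Ioc_subset_Icc_self)
    ((isCompact_Icc.uniformContinuousOn_of_continuous hf₀cont).mono Ioc_subset_Icc_self)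
    (fun n => hint _ _ (hμ_le n) (hfmeas n).aestronglyMeasurable (hfrange n))
    (hint _ _ hμ₀_le ((hf₀cont.mono Ioc_subset_Icc_self).aestronglyMeasurable measurableSet_Ioc)
      hf₀range)
    hmass hμ_le hμ₀_le).neg

/-- **Continuity of the bilinear Stieltjes pairing under uniform convergence.**
`f n, f₀ : [0,τ] → [0,1]` measurable with `f₀` continuous and `sup_{[0,τ]} |f n - f₀| → 0`;
`g n, g₀ : [0,τ] → [0,1]` nonincreasing right-continuous with `g₀` continuous and
`sup_{[0,τ]} |g n - g₀| → 0`.  `μ n` (resp. `μ₀`) is the nonnegative Lebesgue–Stieltjes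
measure generated by `g n` (resp. `g₀`), so that `∫ f dg = -∫ f ∂μ`.  Then
`∫_{(0,τ]} f_n dg_n → ∫_{(0,τ]} f₀ dg₀`. -/
theorem stieltjes_pairing_continuity
    (τ : ℝ) (hτ : 0 < τ)
    (f : ℕ → ℝ → ℝ) (f₀ : ℝ → ℝ)
    (hfmeas : ∀ n, Measurable (f n))
    (hfrange : ∀ n, ∀ t ∈ Set.Icc 0 τ, f n t ∈ Set.Icc (0 : ℝ) 1)
    (hf₀range : ∀ t ∈ Set.Icc 0 τ, f₀ t ∈ Set.Icc (0 : ℝ) 1)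
    (hf₀cont : ContinuousOn f₀ (Set.Icc 0 τ))
    (hfconv : Tendsto (fun n => ⨆ t : Set.Icc (0 : ℝ) τ, |f n t - f₀ t|) atTop (𝓝 0))
    (g : ℕ → ℝ → ℝ) (g₀ : ℝ → ℝ)
    (hgmono : ∀ n, AntitoneOn (g n) (Set.Icc 0 τ))
    (hgrc : ∀ n, ∀ t ∈ Set.Ico 0 τ, ContinuousWithinAt (g n) (Set.Ici t) t)
    (hgrange : ∀ n, ∀ t ∈ Set.Icc 0 τ, g n t ∈ Set.Icc (0 : ℝ) 1)
    (hg₀mono : AntitoneOn g₀ (Set.Icc 0 τ))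
    (hg₀range : ∀ t ∈ Set.Icc 0 τ, g₀ t ∈ Set.Icc (0 : ℝ) 1)
    (hg₀cont : ContinuousOn g₀ (Set.Icc 0 τ))
    (hgconv : Tendsto (fun n => ⨆ t : Set.Icc (0 : ℝ) τ, |g n t - g₀ t|) atTop (𝓝 0))
    (μ : ℕ → Measure ℝ) (μ₀ : Measure ℝ)
    (hμ : ∀ n, ∀ a b : ℝ, a ∈ Set.Icc 0 τ → b ∈ Set.Icc 0 τ → a ≤ b →
      μ n (Set.Ioc a b) = ENNReal.ofReal (g n a - g n b))
    (hμ₀ : ∀ a b : ℝ, a ∈ Set.Icc 0 τ → b ∈ Set.Icc 0 τ → a ≤ b →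
      μ₀ (Set.Ioc a b) = ENNReal.ofReal (g₀ a - g₀ b)) :
    Tendsto (fun n => -∫ t in Set.Ioc (0 : ℝ) τ, f n t ∂(μ n)) atTop
      (𝓝 (-∫ t in Set.Ioc (0 : ℝ) τ, f₀ t ∂μ₀)) :=
  stieltjes_pairing_continuity_general τ hτ f f₀ hfmeas hfrange hf₀range hf₀cont hfconv g g₀ hgrange
    hg₀range hgconv μ μ₀ hμ hμ₀
end

section
/- Continuity of the truncated Wilcoxon functional in the supremum norm: Let tau > 0, and let S_{1,n}, S_{2,n}, S_{1,0}, S_{2,0} : [0, tau] -> [0, 1] be nonincreasing right-continuous functions such that S_{1,0} and S_{2,0} are continuous and sup over [0,tau] of |S_{l,n} - S_{l,0}| -> 0 for l = 1, 2. Then 1 + integral over (0,tau] of Š_{1,n}(t) dS_{2,n}(t) - (1/2) S_{1,n}(tau) S_{2,n}(tau) converges to 1 + integral over (0,tau] of S_{1,0}(t) dS_{2,0}(t) - (1/2) S_{1,0}(tau) S_{2,0}(tau) as n -> infinity, where Š(t) = (S(t) + S(t-))/2. -/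
/-!
Write `∫ Š₁ₙ dμ₂ₙ - ∫ S₁₀ dμ₂₀ = ∫ (Š₁ₙ - S₁₀) dμ₂ₙ + (∫ S₁₀ dμ₂ₙ - ∫ S₁₀ dμ₂₀)`, where `μ = -dS`.
Both `S₁ₙ` and its left limits stay within `sup |S₁ₙ - S₁₀|` of the continuous `S₁₀`, and
`μ₂ₙ` has mass at most one, so the first term tends to zero. For the second, uniform continuity
of `S₁₀` lets one replace `∫ S₁₀ dμ`, uniformly over all these measures, by a Riemann–Stieltjes
sum over one fixed partition; such a sum involves only finitely many values of `S₂ₙ`, which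
converge to those of `S₂₀`. The boundary term converges pointwise.
-/

open MeasureTheory Filter Set Function Topology

section UniformDistance

variable {α ι : Type*} {s : Set α} {g : α → ℝ}

lemma abs_sub_le_iSup_abs_sub {f : α → ℝ} (hf : MapsTo f s (Icc 0 1)) (hg : MapsTo g s (Icc 0 1))
    {x : α} (hx : x ∈ s) : |f x - g x| ≤ ⨆ y : s, |f y - g y| := by
  refine le_ciSup (f := fun y : s => |f y - g y|) ⟨1, ?_⟩ ⟨x, hx⟩
  rintro _ ⟨⟨y, hy⟩, rfl⟩
  obtain ⟨hf0, hf1⟩ := hf hy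
  obtain ⟨hg0, hg1⟩ := hg hy
  exact abs_sub_le_iff.2 ⟨by linarith, by linarith⟩

lemma tendsto_apply_of_tendsto_iSup_abs_sub {l : Filter ι} {f : ι → α → ℝ}
    (hf : ∀ n, MapsTo (f n) s (Icc 0 1)) (hg : MapsTo g s (Icc 0 1))
    (hfg : Tendsto (fun n => ⨆ y : s, |f n y - g y|) l (𝓝 0)) {x : α} (hx : x ∈ s) :
    Tendsto (fun n => f n x) l (𝓝 (g x)) :=
  tendsto_iff_norm_sub_tendsto_zero.2 <|
    squeeze_zero_norm (fun n => by simpa using abs_sub_le_iSup_abs_sub (hf n) hg hx) hfg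

end UniformDistance

section LeftLimit

variable {f : ℝ → ℝ} {a b x : ℝ}

lemma AntitoneOn.antitone_comp_projIcc (hf : AntitoneOn f (Icc a b)) (hab : a ≤ b) :
    Antitone fun y => f (projIcc a b hab y) := fun _ _ hyz =>
  hf (projIcc a b hab _).2 (projIcc a b hab _).2 (monotone_projIcc hab hyz)

lemma comp_projIcc_eventuallyEq_nhdsLT (hab : a ≤ b) (hx : x ∈ Ioc a b) :
    (fun y => f (projIcc a b hab y)) =ᶠ[𝓝[<] x] f := by
  filter_upwards [Ioo_mem_nhdsLT hx.1] with y hy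
  rw [projIcc_of_mem hab ⟨hy.1.le, hy.2.le.trans hx.2⟩]

lemma AntitoneOn.leftLim_eq_leftLim_comp_projIcc (hf : AntitoneOn f (Icc a b)) (hab : a ≤ b)
    (hx : x ∈ Ioc a b) : leftLim f x = leftLim (fun y => f (projIcc a b hab y)) x :=
  leftLim_eq_of_tendsto <| ((hf.antitone_comp_projIcc hab).tendsto_leftLim x).congr'
    (comp_projIcc_eventuallyEq_nhdsLT hab hx)

lemma AntitoneOn.tendsto_leftLim_of_mem_Ioc (hf : AntitoneOn f (Icc a b)) (hx : x ∈ Ioc a b) :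
    Tendsto f (𝓝[<] x) (𝓝 (leftLim f x)) := by
  have hab : a ≤ b := hx.1.le.trans hx.2
  rw [hf.leftLim_eq_leftLim_comp_projIcc hab hx]
  exact ((hf.antitone_comp_projIcc hab).tendsto_leftLim x).congr'
    (comp_projIcc_eventuallyEq_nhdsLT hab hx)

lemma AntitoneOn.leftLim_Ioc (hf : AntitoneOn f (Icc a b)) : AntitoneOn (leftLim f) (Ioc a b) := by
  intro x hx y hy hxy
  have hab : a ≤ b := hx.1.le.trans hx.2
  rw [hf.leftLim_eq_leftLim_comp_projIcc hab hx, hf.leftLim_eq_leftLim_comp_projIcc hab hy]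
  exact (hf.antitone_comp_projIcc hab).leftLim hxy

lemma AntitoneOn.leftLim_mem_of_mapsTo {C : Set ℝ} (hf : AntitoneOn f (Icc a b)) (hC : IsClosed C)
    (hfC : MapsTo f (Icc a b) C) (hx : x ∈ Ioc a b) : leftLim f x ∈ C :=
  hC.mem_of_tendsto (hf.tendsto_leftLim_of_mem_Ioc hx) <| by
    filter_upwards [Ioo_mem_nhdsLT hx.1] with y hy
    exact hfC ⟨hy.1.le, hy.2.le.trans hx.2⟩

lemma AntitoneOn.abs_leftLim_sub_le {G : ℝ → ℝ} {M : ℝ} (hf : AntitoneOn f (Icc a b))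
    (hG : ContinuousOn G (Icc a b)) (hfG : ∀ y ∈ Icc a b, |f y - G y| ≤ M) (hx : x ∈ Ioc a b) :
    |leftLim f x - G x| ≤ M := by
  have hIcc : Icc a b ∈ 𝓝[<] x := mem_of_superset (Ioo_mem_nhdsLT hx.1) <|
    fun y hy => ⟨hy.1.le, hy.2.le.trans hx.2⟩
  have hGx : Tendsto G (𝓝[<] x) (𝓝 (G x)) :=
    (hG x (Ioc_subset_Icc_self hx)).mono_of_mem_nhdsWithin hIcc
  refine le_of_tendsto ((hf.tendsto_leftLim_of_mem_Ioc hx).sub hGx).abs ?_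
  filter_upwards [hIcc] with y hy using hfG y hy

end LeftLimit

noncomputable def halfAveraged (f : ℝ → ℝ) (t : ℝ) : ℝ := (f t + leftLim f t) / 2

section HalfAveraged

variable {f G : ℝ → ℝ} {a b : ℝ}

lemma AntitoneOn.antitoneOn_halfAveraged (hf : AntitoneOn f (Icc a b)) :
    AntitoneOn (halfAveraged f) (Ioc a b) := fun x hx y hy hxy => by
  have h := hf (Ioc_subset_Icc_self hx) (Ioc_subset_Icc_self hy) hxy
  have h' := hf.leftLim_Ioc hx hy hxy
  simp only [halfAveraged]
  linarith

lemma AntitoneOn.mapsTo_halfAveraged (hf : AntitoneOn f (Icc a b))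
    (hf01 : MapsTo f (Icc a b) (Icc 0 1)) : MapsTo (halfAveraged f) (Ioc a b) (Icc 0 1) := by
  intro x hx
  obtain ⟨h0, h1⟩ := hf01 (Ioc_subset_Icc_self hx)
  obtain ⟨h0', h1'⟩ := hf.leftLim_mem_of_mapsTo isClosed_Icc hf01 hx
  constructor <;> simp only [halfAveraged] <;> linarith

lemma AntitoneOn.abs_halfAveraged_sub_le {M : ℝ} (hf : AntitoneOn f (Icc a b))
    (hG : ContinuousOn G (Icc a b)) (hfG : ∀ y ∈ Icc a b, |f y - G y| ≤ M) {x : ℝ}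
    (hx : x ∈ Ioc a b) : |halfAveraged f x - G x| ≤ M := by
  have h := hfG x (Ioc_subset_Icc_self hx)
  have h' := hf.abs_leftLim_sub_le hG hfG hx
  have hsplit : halfAveraged f x - G x = ((f x - G x) + (leftLim f x - G x)) / 2 := by
    rw [halfAveraged]; ring
  rw [hsplit, abs_div, abs_two]
  linarith [abs_add_le (f x - G x) (leftLim f x - G x)]

end HalfAveraged

section Integration

variable {μ : Measure ℝ} {f G : ℝ → ℝ} {a b : ℝ}

lemma ContinuousOn.integrableOn_Ioc_of_lt_top (hG : ContinuousOn G (Icc a b))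
    (hμ : μ (Ioc a b) < ⊤) : IntegrableOn G (Ioc a b) μ := by
  obtain ⟨C, hC⟩ := isCompact_Icc.exists_bound_of_continuousOn hG
  exact .of_bound hμ ((hG.mono Ioc_subset_Icc_self).aestronglyMeasurable measurableSet_Ioc) C
    (ae_restrict_of_forall_mem measurableSet_Ioc fun x hx => hC x (Ioc_subset_Icc_self hx))

lemma AntitoneOn.integrableOn_halfAveraged (hf : AntitoneOn f (Icc a b))
    (hf01 : MapsTo f (Icc a b) (Icc 0 1)) (hμ : μ (Ioc a b) < ⊤) :
    IntegrableOn (halfAveraged f) (Ioc a b) μ := by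
  refine .of_bound hμ (aemeasurable_restrict_of_antitoneOn measurableSet_Ioc
    hf.antitoneOn_halfAveraged).aestronglyMeasurable 1
    (ae_restrict_of_forall_mem measurableSet_Ioc fun x hx => ?_)
  obtain ⟨h0, h1⟩ := hf.mapsTo_halfAveraged hf01 hx
  rwa [Real.norm_eq_abs, abs_of_nonneg h0]

lemma AntitoneOn.abs_setIntegral_halfAveraged_sub_le {M : ℝ} (hf : AntitoneOn f (Icc a b))
    (hf01 : MapsTo f (Icc a b) (Icc 0 1)) (hG : ContinuousOn G (Icc a b))
    (hfG : ∀ y ∈ Icc a b, |f y - G y| ≤ M) (hμ : μ (Ioc a b) < ⊤) :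
    |∫ x in Ioc a b, halfAveraged f x ∂μ - ∫ x in Ioc a b, G x ∂μ| ≤ M * μ.real (Ioc a b) := by
  rw [← integral_sub (hf.integrableOn_halfAveraged hf01 hμ) (hG.integrableOn_Ioc_of_lt_top hμ)]
  exact norm_setIntegral_le_of_norm_le_const (f := fun x => halfAveraged f x - G x) hμ
    fun x hx => hf.abs_halfAveraged_sub_le hG hfG hx

theorem tendsto_setIntegral_halfAveraged {ι : Type*} {l : Filter ι} {f : ι → ℝ → ℝ}
    {μ : ι → Measure ℝ} {L : ℝ} (hf : ∀ n, AntitoneOn (f n) (Icc a b))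
    (hf01 : ∀ n, MapsTo (f n) (Icc a b) (Icc 0 1)) (hG : ContinuousOn G (Icc a b))
    (hG01 : MapsTo G (Icc a b) (Icc 0 1))
    (hfG : Tendsto (fun n => ⨆ y : Icc a b, |f n y - G y|) l (𝓝 0))
    (hμ : ∀ n, μ n (Ioc a b) ≤ 1) (hGL : Tendsto (fun n => ∫ x in Ioc a b, G x ∂μ n) l (𝓝 L)) :
    Tendsto (fun n => ∫ x in Ioc a b, halfAveraged (f n) x ∂μ n) l (𝓝 L) := by
  have hdist : ∀ n, ‖∫ x in Ioc a b, halfAveraged (f n) x ∂μ n - ∫ x in Ioc a b, G x ∂μ n‖ ≤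
      ⨆ y : Icc a b, |f n y - G y| := fun n => by
    have hfin : μ n (Ioc a b) < ⊤ := (hμ n).trans_lt ENNReal.one_lt_top
    have hmass : (μ n).real (Ioc a b) ≤ 1 :=
      ENNReal.toReal_le_of_le_ofReal zero_le_one (by simpa using hμ n)
    calc _ ≤ (⨆ y : Icc a b, |f n y - G y|) * (μ n).real (Ioc a b) :=
          (hf n).abs_setIntegral_halfAveraged_sub_le (hf01 n) hG
            (fun y hy => abs_sub_le_iSup_abs_sub (hf01 n) hG01 hy) hfin
      _ ≤ ⨆ y : Icc a b, |f n y - G y| :=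
          mul_le_of_le_one_right (Real.iSup_nonneg fun _ => abs_nonneg _) hmass
  simpa using (squeeze_zero_norm hdist hfG).add hGL

end Integration

def riemannStieltjesSum (G S : ℝ → ℝ) (t : ℕ → ℝ) (k : ℕ) : ℝ :=
  ∑ i ∈ Finset.range k, (S (t i) - S (t (i + 1))) * G (t (i + 1))

def IsNegStieltjesMeasureOn (μ : Measure ℝ) (S : ℝ → ℝ) (a b : ℝ) : Prop :=
  ∀ x y, x ∈ Icc a b → y ∈ Icc a b → x ≤ y → μ (Ioc x y) = ENNReal.ofReal (S x - S y)

namespace IsNegStieltjesMeasureOn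

variable {μ : Measure ℝ} {S : ℝ → ℝ} {a b x y : ℝ}

lemma measure_Ioc_lt_top (hμ : IsNegStieltjesMeasureOn μ S a b) (hx : x ∈ Icc a b)
    (hy : y ∈ Icc a b) (hxy : x ≤ y) : μ (Ioc x y) < ⊤ := by
  rw [hμ x y hx hy hxy]
  exact ENNReal.ofReal_lt_top

lemma measureReal_Ioc (hμ : IsNegStieltjesMeasureOn μ S a b) (hS : AntitoneOn S (Icc a b))
    (hx : x ∈ Icc a b) (hy : y ∈ Icc a b) (hxy : x ≤ y) : μ.real (Ioc x y) = S x - S y := by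
  rw [measureReal_def, hμ x y hx hy hxy, ENNReal.toReal_ofReal (sub_nonneg.2 (hS hx hy hxy))]

lemma measure_Ioc_le_one (hμ : IsNegStieltjesMeasureOn μ S a b) (hab : a ≤ b)
    (hS01 : MapsTo S (Icc a b) (Icc 0 1)) : μ (Ioc a b) ≤ 1 := by
  rw [hμ a b (left_mem_Icc.2 hab) (right_mem_Icc.2 hab) hab]
  exact ENNReal.ofReal_le_one.2 <| by
    linarith [(hS01 (left_mem_Icc.2 hab)).2, (hS01 (right_mem_Icc.2 hab)).1]

end IsNegStieltjesMeasureOn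

section RiemannStieltjes

variable {μ : Measure ℝ} {S G : ℝ → ℝ} {a b ε : ℝ}

lemma abs_setIntegral_sub_measureReal_mul_le {α : Type*} [MeasurableSpace α] {ν : Measure α}
    {s : Set α} {F : α → ℝ} {c : ℝ} (hs : ν s < ⊤) (hF : IntegrableOn F s ν)
    (hFc : ∀ x ∈ s, |F x - c| ≤ ε) : |∫ x in s, F x ∂ν - ν.real s * c| ≤ ε * ν.real s := by
  rw [← smul_eq_mul, ← setIntegral_const, ← integral_sub hF (integrableOn_const hs.ne)]
  exact norm_setIntegral_le_of_norm_le_const (f := fun x => F x - c) hs hFc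

lemma abs_setIntegral_sub_riemannStieltjesSum_le (hμ : IsNegStieltjesMeasureOn μ S a b)
    (hS : AntitoneOn S (Icc a b)) (hG : ContinuousOn G (Icc a b)) {t : ℕ → ℝ} {k : ℕ}
    (ht : Monotone t) (ht0 : t 0 = a) (htk : t k = b)
    (hGt : ∀ i < k, ∀ x ∈ Ioc (t i) (t (i + 1)), |G x - G (t (i + 1))| ≤ ε) :
    |∫ x in Ioc a b, G x ∂μ - riemannStieltjesSum G S t k| ≤ ε * (S a - S b) := by
  have hmem : ∀ i ≤ k, t i ∈ Icc a b := fun i hi =>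
    ⟨ht0 ▸ ht (Nat.zero_le i), htk ▸ ht hi⟩
  have hfin : ∀ i < k, μ (Ioc (t i) (t (i + 1))) < ⊤ := fun i hi =>
    hμ.measure_Ioc_lt_top (hmem i hi.le) (hmem (i + 1) hi) (ht i.le_succ)
  have hint : ∀ i < k, IntegrableOn G (Ioc (t i) (t (i + 1))) μ := fun i hi =>
    (hG.mono (Icc_subset_Icc (hmem i hi.le).1 (hmem (i + 1) hi).2)).integrableOn_Ioc_of_lt_top
      (hfin i hi)
  have hpiece : ∀ i < k, |∫ x in Ioc (t i) (t (i + 1)), G x ∂μ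
      - (S (t i) - S (t (i + 1))) * G (t (i + 1))| ≤ ε * (S (t i) - S (t (i + 1))) := by
    intro i hi
    rw [← hμ.measureReal_Ioc hS (hmem i hi.le) (hmem (i + 1) hi) (ht i.le_succ)]
    exact abs_setIntegral_sub_measureReal_mul_le (hfin i hi) (hint i hi) (hGt i hi)
  have hsplit : ∫ x in Ioc a b, G x ∂μ =
      ∑ i ∈ Finset.range k, ∫ x in Ioc (t i) (t (i + 1)), G x ∂μ := by
    rw [← ht0, ← htk, ← intervalIntegral.integral_of_le (ht k.zero_le),
      ← intervalIntegral.sum_integral_adjacent_intervals fun i hi =>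
        (intervalIntegrable_iff_integrableOn_Ioc_of_le (ht i.le_succ)).2 (hint i hi)]
    exact Finset.sum_congr rfl fun i _ => intervalIntegral.integral_of_le (ht i.le_succ)
  calc |∫ x in Ioc a b, G x ∂μ - riemannStieltjesSum G S t k|
      = |∑ i ∈ Finset.range k, (∫ x in Ioc (t i) (t (i + 1)), G x ∂μ
          - (S (t i) - S (t (i + 1))) * G (t (i + 1)))| := by
        rw [hsplit, riemannStieltjesSum, Finset.sum_sub_distrib]
    _ ≤ ∑ i ∈ Finset.range k, ε * (S (t i) - S (t (i + 1))) :=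
        (Finset.abs_sum_le_sum_abs _ _).trans <|
          Finset.sum_le_sum fun i hi => hpiece i (Finset.mem_range.1 hi)
    _ = ε * (S a - S b) := by
        rw [← Finset.mul_sum, Finset.sum_range_sub' (fun i => S (t i)), ht0, htk]

lemma ContinuousOn.exists_partition_abs_sub_le (hG : ContinuousOn G (Icc a b)) (hab : a ≤ b)
    (hε : 0 < ε) : ∃ (k : ℕ) (t : ℕ → ℝ), Monotone t ∧ t 0 = a ∧ t k = b ∧
      ∀ i < k, ∀ x ∈ Ioc (t i) (t (i + 1)), |G x - G (t (i + 1))| ≤ ε := by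
  obtain ⟨δ, hδ, hGδ⟩ := Metric.uniformContinuousOn_iff.1
    (isCompact_Icc.uniformContinuousOn_of_continuous hG) ε hε
  obtain ⟨k, hk⟩ := exists_nat_gt ((b - a) / δ)
  have hk0 : (0 : ℝ) < k := lt_of_le_of_lt (div_nonneg (sub_nonneg.2 hab) hδ.le) hk
  have hmesh : (b - a) / k < δ := by
    rw [div_lt_iff₀ hk0]; rw [div_lt_iff₀ hδ] at hk; linarith
  set t : ℕ → ℝ := fun i => a + i * ((b - a) / k)
  have hstep : 0 ≤ (b - a) / k := div_nonneg (sub_nonneg.2 hab) hk0.le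
  have ht : Monotone t := fun i j hij => by
    simp only [t]
    gcongr
  have htk : t k = b := by simp only [t]; field_simp; ring
  refine ⟨k, t, ht, by simp [t], htk, fun i hi x hx => ?_⟩
  have hti : a ≤ t i := by simpa [t] using ht i.zero_le
  have hti' : t (i + 1) ≤ b := htk ▸ ht hi
  have hdiff : t (i + 1) - t i = (b - a) / k := by simp only [t]; push_cast; ring
  have hdist : dist x (t (i + 1)) < δ := by
    rw [Real.dist_eq, abs_sub_lt_iff]; constructor <;> linarith [hx.1, hx.2]
  exact (hGδ x ⟨hti.trans hx.1.le, hx.2.trans hti'⟩ _ ⟨hti.trans (ht i.le_succ), hti'⟩ hdist).le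

theorem tendsto_setIntegral_of_isNegStieltjesMeasureOn {ι : Type*} {l : Filter ι}
    {S : ι → ℝ → ℝ} {S₀ : ℝ → ℝ} {μ : ι → Measure ℝ} {μ₀ : Measure ℝ} (hab : a ≤ b)
    (hG : ContinuousOn G (Icc a b)) (hS : ∀ n, AntitoneOn (S n) (Icc a b))
    (hS₀ : AntitoneOn S₀ (Icc a b)) (hS01 : ∀ n, MapsTo (S n) (Icc a b) (Icc 0 1))
    (hS₀01 : MapsTo S₀ (Icc a b) (Icc 0 1))
    (hSS₀ : ∀ x ∈ Icc a b, Tendsto (fun n => S n x) l (𝓝 (S₀ x)))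
    (hμ : ∀ n, IsNegStieltjesMeasureOn (μ n) (S n) a b)
    (hμ₀ : IsNegStieltjesMeasureOn μ₀ S₀ a b) :
    Tendsto (fun n => ∫ x in Ioc a b, G x ∂μ n) l (𝓝 (∫ x in Ioc a b, G x ∂μ₀)) := by
  refine Metric.tendsto_nhds.2 fun ε hε => ?_
  obtain ⟨k, t, ht, ht0, htk, hGt⟩ := hG.exists_partition_abs_sub_le hab (by positivity : 0 < ε / 4)
  have hmem : ∀ i ≤ k, t i ∈ Icc a b := fun i hi => ⟨ht0 ▸ ht i.zero_le, htk ▸ ht hi⟩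
  have happrox : ∀ {ν : Measure ℝ} {T : ℝ → ℝ}, IsNegStieltjesMeasureOn ν T a b →
      AntitoneOn T (Icc a b) → MapsTo T (Icc a b) (Icc 0 1) →
      |∫ x in Ioc a b, G x ∂ν - riemannStieltjesSum G T t k| ≤ ε / 4 := fun hν hT hT01 =>
    (abs_setIntegral_sub_riemannStieltjesSum_le hν hT hG ht ht0 htk hGt).trans <|
      mul_le_of_le_one_right (by positivity) <| by
        linarith [(hT01 (left_mem_Icc.2 hab)).2, (hT01 (right_mem_Icc.2 hab)).1]
  have hsum : Tendsto (fun n => riemannStieltjesSum G (S n) t k) l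
      (𝓝 (riemannStieltjesSum G S₀ t k)) :=
    tendsto_finsetSum _ fun i hi =>
      ((hSS₀ _ (hmem i (Finset.mem_range.1 hi).le)).sub
        (hSS₀ _ (hmem (i + 1) (Finset.mem_range.1 hi)))).mul_const _
  filter_upwards [Metric.tendsto_nhds.1 hsum (ε / 4) (by positivity)] with n hn
  have hn' := happrox (hμ n) (hS n) (hS01 n)
  have h₀ := happrox hμ₀ hS₀ hS₀01
  rw [Real.dist_eq] at hn ⊢
  rw [abs_le] at hn' h₀
  rw [abs_lt] at hn ⊢
  constructor <;> linarith [hn.1, hn.2, hn'.1, hn'.2, h₀.1, h₀.2]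

end RiemannStieltjes

theorem truncated_wilcoxon_functional_continuity_general
    (τ : ℝ) (hτ : 0 < τ)
    (S₁ S₂ : ℕ → ℝ → ℝ) (S₁₀ S₂₀ : ℝ → ℝ)
    (hS₁mono : ∀ n, AntitoneOn (S₁ n) (Set.Icc 0 τ))
    (hS₂mono : ∀ n, AntitoneOn (S₂ n) (Set.Icc 0 τ))
    (hS₁range : ∀ n, ∀ t ∈ Set.Icc 0 τ, S₁ n t ∈ Set.Icc (0 : ℝ) 1)
    (hS₂range : ∀ n, ∀ t ∈ Set.Icc 0 τ, S₂ n t ∈ Set.Icc (0 : ℝ) 1)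
    (hS₂₀mono : AntitoneOn S₂₀ (Set.Icc 0 τ))
    (hS₁₀range : ∀ t ∈ Set.Icc 0 τ, S₁₀ t ∈ Set.Icc (0 : ℝ) 1)
    (hS₂₀range : ∀ t ∈ Set.Icc 0 τ, S₂₀ t ∈ Set.Icc (0 : ℝ) 1)
    (hS₁₀cont : ContinuousOn S₁₀ (Set.Icc 0 τ))
    (hS₁conv : Tendsto (fun n => ⨆ t : Set.Icc (0 : ℝ) τ, |S₁ n t - S₁₀ t|) atTop (𝓝 0))
    (hS₂conv : Tendsto (fun n => ⨆ t : Set.Icc (0 : ℝ) τ, |S₂ n t - S₂₀ t|) atTop (𝓝 0))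
    (μ₂ : ℕ → Measure ℝ) (μ₂₀ : Measure ℝ)
    (hμ₂ : ∀ n, ∀ a b : ℝ, a ∈ Set.Icc 0 τ → b ∈ Set.Icc 0 τ → a ≤ b →
      μ₂ n (Set.Ioc a b) = ENNReal.ofReal (S₂ n a - S₂ n b))
    (hμ₂₀ : ∀ a b : ℝ, a ∈ Set.Icc 0 τ → b ∈ Set.Icc 0 τ → a ≤ b →
      μ₂₀ (Set.Ioc a b) = ENNReal.ofReal (S₂₀ a - S₂₀ b)) :
    Tendsto
      (fun n => 1 + -∫ t in Set.Ioc (0 : ℝ) τ,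
            (S₁ n t + Function.leftLim (S₁ n) t) / 2 ∂(μ₂ n)
          - (1 / 2) * S₁ n τ * S₂ n τ) atTop
      (𝓝 (1 + -∫ t in Set.Ioc (0 : ℝ) τ, S₁₀ t ∂μ₂₀ - (1 / 2) * S₁₀ τ * S₂₀ τ)) := by
  have hS₂pointwise : ∀ t ∈ Icc 0 τ, Tendsto (fun n => S₂ n t) atTop (𝓝 (S₂₀ t)) :=
    fun t ht => tendsto_apply_of_tendsto_iSup_abs_sub hS₂range hS₂₀range hS₂conv ht
  have hintegral : Tendsto (fun n => ∫ t in Ioc 0 τ, halfAveraged (S₁ n) t ∂μ₂ n) atTop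
      (𝓝 (∫ t in Ioc 0 τ, S₁₀ t ∂μ₂₀)) :=
    tendsto_setIntegral_halfAveraged hS₁mono hS₁range hS₁₀cont hS₁₀range hS₁conv
      (fun n => IsNegStieltjesMeasureOn.measure_Ioc_le_one (hμ₂ n) hτ.le (hS₂range n))
      (tendsto_setIntegral_of_isNegStieltjesMeasureOn hτ.le hS₁₀cont hS₂mono hS₂₀mono hS₂range
        hS₂₀range hS₂pointwise hμ₂ hμ₂₀)
  have hτmem : τ ∈ Icc 0 τ := right_mem_Icc.2 hτ.le
  have hS₁τ := tendsto_apply_of_tendsto_iSup_abs_sub hS₁range hS₁₀range hS₁conv hτmem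
  exact (tendsto_const_nhds.add hintegral.neg).sub
    ((hS₁τ.const_mul (1 / 2)).mul (hS₂pointwise τ hτmem))

/-- **Continuity of the truncated Wilcoxon functional in the supremum norm.**
`S₁ n, S₂ n, S₁₀, S₂₀ : [0,τ] → [0,1]` are nonincreasing right-continuous, `S₁₀` and `S₂₀`
continuous, with `sup_{[0,τ]} |Sₗ n - Sₗ₀| → 0` for `l = 1,2`.  `μ₂ n` (resp. `μ₂₀`) is the
nonnegative Lebesgue–Stieltjes measure generated by `S₂ n` (resp. `S₂₀`), so `∫ f dS₂ = -∫ f ∂μ₂`.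
Writing `Š(t) = (S(t) + S(t-))/2`, the truncated Wilcoxon functional
`1 + ∫_{(0,τ]} Š₁ₙ dS₂ₙ - (1/2) S₁ₙ(τ) S₂ₙ(τ)` converges to
`1 + ∫_{(0,τ]} S₁₀ dS₂₀ - (1/2) S₁₀(τ) S₂₀(τ)`. -/
theorem truncated_wilcoxon_functional_continuity
    (τ : ℝ) (hτ : 0 < τ)
    (S₁ S₂ : ℕ → ℝ → ℝ) (S₁₀ S₂₀ : ℝ → ℝ)
    (hS₁mono : ∀ n, AntitoneOn (S₁ n) (Set.Icc 0 τ))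
    (hS₂mono : ∀ n, AntitoneOn (S₂ n) (Set.Icc 0 τ))
    (hS₁rc : ∀ n, ∀ t ∈ Set.Ico 0 τ, ContinuousWithinAt (S₁ n) (Set.Ici t) t)
    (hS₂rc : ∀ n, ∀ t ∈ Set.Ico 0 τ, ContinuousWithinAt (S₂ n) (Set.Ici t) t)
    (hS₁range : ∀ n, ∀ t ∈ Set.Icc 0 τ, S₁ n t ∈ Set.Icc (0 : ℝ) 1)
    (hS₂range : ∀ n, ∀ t ∈ Set.Icc 0 τ, S₂ n t ∈ Set.Icc (0 : ℝ) 1)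
    (hS₁₀mono : AntitoneOn S₁₀ (Set.Icc 0 τ)) (hS₂₀mono : AntitoneOn S₂₀ (Set.Icc 0 τ))
    (hS₁₀range : ∀ t ∈ Set.Icc 0 τ, S₁₀ t ∈ Set.Icc (0 : ℝ) 1)
    (hS₂₀range : ∀ t ∈ Set.Icc 0 τ, S₂₀ t ∈ Set.Icc (0 : ℝ) 1)
    (hS₁₀cont : ContinuousOn S₁₀ (Set.Icc 0 τ)) (hS₂₀cont : ContinuousOn S₂₀ (Set.Icc 0 τ))
    (hS₁conv : Tendsto (fun n => ⨆ t : Set.Icc (0 : ℝ) τ, |S₁ n t - S₁₀ t|) atTop (𝓝 0))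
    (hS₂conv : Tendsto (fun n => ⨆ t : Set.Icc (0 : ℝ) τ, |S₂ n t - S₂₀ t|) atTop (𝓝 0))
    (μ₂ : ℕ → Measure ℝ) (μ₂₀ : Measure ℝ)
    (hμ₂ : ∀ n, ∀ a b : ℝ, a ∈ Set.Icc 0 τ → b ∈ Set.Icc 0 τ → a ≤ b →
      μ₂ n (Set.Ioc a b) = ENNReal.ofReal (S₂ n a - S₂ n b))
    (hμ₂₀ : ∀ a b : ℝ, a ∈ Set.Icc 0 τ → b ∈ Set.Icc 0 τ → a ≤ b →
      μ₂₀ (Set.Ioc a b) = ENNReal.ofReal (S₂₀ a - S₂₀ b)) :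
    Tendsto
      (fun n => 1 + -∫ t in Set.Ioc (0 : ℝ) τ,
            (S₁ n t + Function.leftLim (S₁ n) t) / 2 ∂(μ₂ n)
          - (1 / 2) * S₁ n τ * S₂ n τ) atTop
      (𝓝 (1 + -∫ t in Set.Ioc (0 : ℝ) τ, S₁₀ t ∂μ₂₀ - (1 / 2) * S₁₀ τ * S₂₀ τ)) :=
  truncated_wilcoxon_functional_continuity_general τ hτ S₁ S₂ S₁₀ S₂₀ hS₁mono hS₂mono hS₁range
    hS₂range hS₂₀mono hS₁₀range hS₂₀range hS₁₀cont hS₁conv hS₂conv μ₂ μ₂₀ hμ₂ hμ₂₀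
end

section
/- Law of large numbers for two-sample averages of a bounded kernel: Let (xi_i)_{i>=1} and (eta_j)_{j>=1} be two mutually independent sequences of i.i.d. random elements with values in measurable spaces E_1 and E_2 respectively, and let h : E_1 x E_2 -> [0, 1] be a measurable kernel. Then as min(m, n) -> infinity, the two-sample average (1/(m n)) * sum over i = 1..m and j = 1..n of h(xi_i, eta_j) converges in probability to E[ h(xi_1, eta_1) ]. -/
/-!
Second-moment method. Every term `h (ξ i) (η j)` has the law of `h (ξ 0) (η 0)`, and the terms
indexed by `(i, j)` and `(i', j')` are independent as soon as `i ≠ i'` and `j ≠ j'`. So in the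
variance of the double sum only pairs of terms sharing a row or a column contribute, each by at
most `1`; the variance of the average is at most `1/m + 1/n`, and Chebyshev's inequality concludes.
-/

open MeasureTheory ProbabilityTheory Filter Set Function Topology
open MeasurableSpace Finset

lemma card_filter_fst_eq_or_snd_eq_le {α β : Type*} [DecidableEq α] [DecidableEq β]
    (s : Finset α) (t : Finset β) (p : α × β) :
    #{q ∈ s ×ˢ t | p.1 = q.1 ∨ p.2 = q.2} ≤ #t + #s := by
  rw [filter_or]
  refine (Finset.card_union_le _ _).trans (add_le_add ?_ ?_)
  · calc #{q ∈ s ×ˢ t | p.1 = q.1} ≤ #({p.1} ×ˢ t) := card_le_card fun q hq ↦ by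
          simp only [mem_filter, mem_product] at hq
          simp [hq.1.2, hq.2]
      _ = #t := by simp
  · calc #{q ∈ s ×ˢ t | p.2 = q.2} ≤ #(s ×ˢ {p.2}) := card_le_card fun q hq ↦ by
          simp only [mem_filter, mem_product] at hq
          simp [hq.1.1, hq.2]
      _ = #s := by simp

namespace ProbabilityTheory

variable {Ω : Type*} {mΩ : MeasurableSpace Ω} {μ : Measure Ω}

lemma isPiSystem_image2_inter_measurableSet (m₁ m₂ : MeasurableSpace Ω) :
    IsPiSystem (image2 (· ∩ ·) {s | MeasurableSet[m₁] s} {t | MeasurableSet[m₂] t}) := by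
  rintro _ ⟨s, hs, t, ht, rfl⟩ _ ⟨s', hs', t', ht', rfl⟩ -
  exact ⟨s ∩ s', hs.inter hs', t ∩ t', ht.inter ht', Set.inter_inter_inter_comm s s' t t'⟩

lemma generateFrom_image2_inter_measurableSet (m₁ m₂ : MeasurableSpace Ω) :
    generateFrom (image2 (· ∩ ·) {s | MeasurableSet[m₁] s} {t | MeasurableSet[m₂] t})
      = m₁ ⊔ m₂ := by
  refine le_antisymm (generateFrom_le ?_) (sup_le (fun s hs ↦ ?_) (fun t ht ↦ ?_))
  · rintro _ ⟨s, hs, t, ht, rfl⟩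
    exact (le_sup_left (b := m₂) s hs).inter (le_sup_right (a := m₁) t ht)
  · exact measurableSet_generateFrom ⟨s, hs, univ, MeasurableSet.univ, Set.inter_univ s⟩
  · exact measurableSet_generateFrom ⟨univ, MeasurableSet.univ, t, ht, Set.univ_inter t⟩

theorem Indep.sup_sup [IsZeroOrProbabilityMeasure μ] {m₁ m₂ m₃ m₄ : MeasurableSpace Ω}
    (h₁ : m₁ ≤ mΩ) (h₂ : m₂ ≤ mΩ) (h₃ : m₃ ≤ mΩ) (h₄ : m₄ ≤ mΩ)
    (h₁₃ : Indep m₁ m₃ μ) (h₂₄ : Indep m₂ m₄ μ) (h : Indep (m₁ ⊔ m₃) (m₂ ⊔ m₄) μ) :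
    Indep (m₁ ⊔ m₂) (m₃ ⊔ m₄) μ := by
  have h₁₂ : Indep m₁ m₂ μ := indep_of_indep_of_le h le_sup_left le_sup_left
  have h₃₄ : Indep m₃ m₄ μ := indep_of_indep_of_le h le_sup_right le_sup_right
  refine IndepSets.indep (sup_le h₁ h₂) (sup_le h₃ h₄)
    (isPiSystem_image2_inter_measurableSet m₁ m₂) (isPiSystem_image2_inter_measurableSet m₃ m₄)
    (generateFrom_image2_inter_measurableSet m₁ m₂).symm
    (generateFrom_image2_inter_measurableSet m₃ m₄).symm ?_
  rw [IndepSets_iff]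
  rintro _ _ ⟨s₁, hs₁, s₂, hs₂, rfl⟩ ⟨s₃, hs₃, s₄, hs₄, rfl⟩
  rw [Indep_iff] at h h₁₃ h₂₄ h₁₂ h₃₄
  calc μ (s₁ ∩ s₂ ∩ (s₃ ∩ s₄)) = μ (s₁ ∩ s₃ ∩ (s₂ ∩ s₄)) := by
        rw [Set.inter_inter_inter_comm]
    _ = μ s₁ * μ s₃ * (μ s₂ * μ s₄) := by
        rw [h _ _ ((le_sup_left (b := m₃) s₁ hs₁).inter (le_sup_right (a := m₁) s₃ hs₃))
          ((le_sup_left (b := m₄) s₂ hs₂).inter (le_sup_right (a := m₂) s₄ hs₄)),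
          h₁₃ _ _ hs₁ hs₃, h₂₄ _ _ hs₂ hs₄]
    _ = μ (s₁ ∩ s₂) * μ (s₃ ∩ s₄) := by
        rw [h₁₂ _ _ hs₁ hs₂, h₃₄ _ _ hs₃ hs₄]; ring

theorem IndepFun.prodMk_prodMk [IsZeroOrProbabilityMeasure μ]
    {β₁ β₂ β₃ β₄ : Type*} [MeasurableSpace β₁] [MeasurableSpace β₂] [MeasurableSpace β₃]
    [MeasurableSpace β₄] {X₁ : Ω → β₁} {X₂ : Ω → β₂} {X₃ : Ω → β₃} {X₄ : Ω → β₄}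
    (hX₁ : Measurable X₁) (hX₂ : Measurable X₂) (hX₃ : Measurable X₃) (hX₄ : Measurable X₄)
    (h₁₃ : X₁ ⟂ᵢ[μ] X₃) (h₂₄ : X₂ ⟂ᵢ[μ] X₄)
    (h : (fun ω ↦ (X₁ ω, X₃ ω)) ⟂ᵢ[μ] (fun ω ↦ (X₂ ω, X₄ ω))) :
    (fun ω ↦ (X₁ ω, X₂ ω)) ⟂ᵢ[μ] (fun ω ↦ (X₃ ω, X₄ ω)) := by
  simp only [IndepFun_iff_Indep, Prod.instMeasurableSpace, comap_prodMk] at *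
  exact Indep.sup_sup hX₁.comap_le hX₂.comap_le hX₃.comap_le hX₄.comap_le h₁₃ h₂₄ h

lemma covariance_le_one_of_mem_Icc [IsProbabilityMeasure μ] {X Y : Ω → ℝ}
    (hX : ∀ ω, X ω ∈ Set.Icc 0 1) (hY : ∀ ω, Y ω ∈ Set.Icc 0 1) : cov[X, Y; μ] ≤ 1 := by
  have mean_mem {Z : Ω → ℝ} (hZ : ∀ ω, Z ω ∈ Set.Icc 0 1) : μ[Z] ∈ Set.Icc 0 1 := by
    have hnorm : ∀ ω, ‖Z ω‖ ≤ 1 := fun ω ↦ by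
      rw [Real.norm_eq_abs, abs_le]; exact ⟨by linarith [(hZ ω).1], (hZ ω).2⟩
    refine ⟨integral_nonneg fun ω ↦ (hZ ω).1, le_of_abs_le ?_⟩
    simpa using norm_integral_le_of_norm_le_const (μ := μ) (ae_of_all _ hnorm)
  have dist_le {Z : Ω → ℝ} (hZ : ∀ ω, Z ω ∈ Set.Icc 0 1) (ω : Ω) : ‖Z ω - μ[Z]‖ ≤ 1 := by
    have := mean_mem hZ
    rw [Real.norm_eq_abs, abs_le]; constructor <;> linarith [(hZ ω).1, (hZ ω).2, this.1, this.2]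
  calc cov[X, Y; μ] ≤ ‖cov[X, Y; μ]‖ := le_abs_self _
    _ ≤ 1 * μ.real univ := norm_integral_le_of_norm_le_const (ae_of_all _ fun ω ↦ by
        rw [norm_mul]; exact mul_le_one₀ (dist_le hX ω) (norm_nonneg _) (dist_le hY ω))
    _ = 1 := by simp

theorem variance_sum_le_of_indepFun [IsFiniteMeasure μ] {ι : Type*} {s : Finset ι}
    {X : ι → Ω → ℝ} (r : ι → ι → Prop) [DecidableRel r] {C : ℝ}
    (hX : ∀ i ∈ s, MemLp (X i) 2 μ) (hC : ∀ i ∈ s, ∀ j ∈ s, cov[X i, X j; μ] ≤ C)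
    (hindep : ∀ i ∈ s, ∀ j ∈ s, ¬ r i j → X i ⟂ᵢ[μ] X j) :
    Var[fun ω ↦ ∑ i ∈ s, X i ω; μ] ≤ C * ∑ i ∈ s, (#{j ∈ s | r i j} : ℝ) := by
  rw [variance_fun_sum' hX, Finset.mul_sum]
  refine Finset.sum_le_sum fun i hi ↦ ?_
  rw [← Finset.sum_filter_of_ne (p := fun j ↦ r i j) fun j hj hcov ↦ ?_, mul_comm, ← nsmul_eq_mul]
  · exact Finset.sum_le_card_nsmul _ _ _ fun j hj ↦ hC i hi j (Finset.mem_filter.1 hj).1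
  · by_contra hr
    exact hcov ((hindep i hi j hj hr).covariance_eq_zero (hX i hi) (hX j hj))

end ProbabilityTheory

section TwoSample

noncomputable def twoSampleMean {Ω E₁ E₂ : Type*} (h : E₁ → E₂ → ℝ) (ξ : ℕ → Ω → E₁)
    (η : ℕ → Ω → E₂) (m n : ℕ) (ω : Ω) : ℝ :=
  ((m : ℝ) * n)⁻¹ * ∑ i ∈ range m, ∑ j ∈ range n, h (ξ i ω) (η j ω)

structure IsTwoSampleIID {Ω E₁ E₂ : Type*} [MeasurableSpace Ω] [MeasurableSpace E₁]
    [MeasurableSpace E₂] (P : Measure Ω) (ξ : ℕ → Ω → E₁) (η : ℕ → Ω → E₂) : Prop where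
  measurable_left : ∀ i, Measurable (ξ i)
  measurable_right : ∀ j, Measurable (η j)
  iIndepFun_left : iIndepFun ξ P
  iIndepFun_right : iIndepFun η P
  map_left : ∀ i, P.map (ξ i) = P.map (ξ 0)
  map_right : ∀ j, P.map (η j) = P.map (η 0)
  indepFun_left_right : IndepFun (fun ω i ↦ ξ i ω) (fun ω j ↦ η j ω) P

variable {Ω E₁ E₂ : Type*} [MeasurableSpace Ω] [MeasurableSpace E₁] [MeasurableSpace E₂]
  {P : Measure Ω} {ξ : ℕ → Ω → E₁} {η : ℕ → Ω → E₂} {h : E₁ → E₂ → ℝ}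

namespace IsTwoSampleIID

lemma indepFun (hS : IsTwoSampleIID P ξ η) (i j : ℕ) : ξ i ⟂ᵢ[P] η j :=
  hS.indepFun_left_right.comp (measurable_pi_apply i) (measurable_pi_apply j)

lemma identDistrib_prodMk (hS : IsTwoSampleIID P ξ η) (i j : ℕ) :
    IdentDistrib (fun ω ↦ (ξ i ω, η j ω)) (fun ω ↦ (ξ 0 ω, η 0 ω)) P P :=
  have := hS.iIndepFun_left.isProbabilityMeasure
  IdentDistrib.prodMk
    ⟨(hS.measurable_left i).aemeasurable, (hS.measurable_left 0).aemeasurable, hS.map_left i⟩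
    ⟨(hS.measurable_right j).aemeasurable, (hS.measurable_right 0).aemeasurable, hS.map_right j⟩
    (hS.indepFun i j) (hS.indepFun 0 0)

lemma indepFun_prodMk_prodMk (hS : IsTwoSampleIID P ξ η) {i i' j j' : ℕ} (hi : i ≠ i')
    (hj : j ≠ j') : (fun ω ↦ (ξ i ω, η j ω)) ⟂ᵢ[P] (fun ω ↦ (ξ i' ω, η j' ω)) :=
  have := hS.iIndepFun_left.isProbabilityMeasure
  IndepFun.prodMk_prodMk (hS.measurable_left i) (hS.measurable_right j)
    (hS.measurable_left i') (hS.measurable_right j') (hS.iIndepFun_left.indepFun hi)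
    (hS.iIndepFun_right.indepFun hj)
    (hS.indepFun_left_right.comp ((measurable_pi_apply i).prodMk (measurable_pi_apply i'))
      ((measurable_pi_apply j).prodMk (measurable_pi_apply j')))

lemma memLp_kernel [IsFiniteMeasure P] (hS : IsTwoSampleIID P ξ η) (hhm : Measurable (uncurry h))
    (hh : ∀ a b, h a b ∈ Set.Icc 0 1) (i j : ℕ) :
    MemLp (fun ω ↦ h (ξ i ω) (η j ω)) 2 P :=
  MemLp.of_bound
    (hhm.comp ((hS.measurable_left i).prodMk (hS.measurable_right j))).aestronglyMeasurable 1
    (ae_of_all _ fun ω ↦ by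
      rw [Real.norm_eq_abs, abs_le]; exact ⟨by linarith [(hh (ξ i ω) (η j ω)).1], (hh _ _).2⟩)

lemma integral_kernel (hS : IsTwoSampleIID P ξ η) (hhm : Measurable (uncurry h)) (i j : ℕ) :
    ∫ ω, h (ξ i ω) (η j ω) ∂P = ∫ ω, h (ξ 0 ω) (η 0 ω) ∂P :=
  ((hS.identDistrib_prodMk i j).comp hhm).integral_eq

lemma memLp_twoSampleMean [IsFiniteMeasure P] (hS : IsTwoSampleIID P ξ η)
    (hhm : Measurable (uncurry h)) (hh : ∀ a b, h a b ∈ Set.Icc 0 1) (m n : ℕ) :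
    MemLp (twoSampleMean h ξ η m n) 2 P :=
  (memLp_finsetSum _ fun i _ ↦ memLp_finsetSum _ fun j _ ↦ hS.memLp_kernel hhm hh i j).const_mul _

lemma integral_twoSampleMean [IsFiniteMeasure P] (hS : IsTwoSampleIID P ξ η)
    (hhm : Measurable (uncurry h)) (hh : ∀ a b, h a b ∈ Set.Icc 0 1) {m n : ℕ} (hm : m ≠ 0)
    (hn : n ≠ 0) : P[twoSampleMean h ξ η m n] = ∫ ω, h (ξ 0 ω) (η 0 ω) ∂P := by
  have hint (i j : ℕ) := (hS.memLp_kernel hhm hh i j).integrable one_le_two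
  simp only [twoSampleMean]
  rw [integral_const_mul, integral_finsetSum _ fun i _ ↦ integrable_finsetSum _ fun j _ ↦ hint i j]
  simp_rw [integral_finsetSum _ fun j _ ↦ hint _ j, hS.integral_kernel hhm, sum_const, card_range,
    nsmul_eq_mul]
  field_simp

lemma variance_twoSampleMean_le [IsProbabilityMeasure P] (hS : IsTwoSampleIID P ξ η)
    (hhm : Measurable (uncurry h)) (hh : ∀ a b, h a b ∈ Set.Icc 0 1) {m n : ℕ} (hm : m ≠ 0)
    (hn : n ≠ 0) : Var[twoSampleMean h ξ η m n; P] ≤ (m : ℝ)⁻¹ + (n : ℝ)⁻¹ := by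
  have hsum : Var[fun ω ↦ ∑ p ∈ range m ×ˢ range n, h (ξ p.1 ω) (η p.2 ω); P]
      ≤ (m : ℝ) * n * (n + m) := by
    refine (variance_sum_le_of_indepFun (fun p q ↦ p.1 = q.1 ∨ p.2 = q.2)
      (fun p _ ↦ hS.memLp_kernel hhm hh p.1 p.2)
      (fun p _ q _ ↦ covariance_le_one_of_mem_Icc (fun ω ↦ hh _ _) (fun ω ↦ hh _ _))
      (fun p _ q _ hpq ↦ ?_)).trans ?_
    · push Not at hpq
      exact (hS.indepFun_prodMk_prodMk hpq.1 hpq.2).comp hhm hhm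
    · rw [one_mul]
      calc ∑ p ∈ range m ×ˢ range n, (#{q ∈ range m ×ˢ range n | p.1 = q.1 ∨ p.2 = q.2} : ℝ)
          ≤ ∑ p ∈ range m ×ˢ range n, ((n : ℝ) + m) := sum_le_sum fun p _ ↦ by
            exact_mod_cast (card_filter_fst_eq_or_snd_eq_le _ _ p).trans (by simp)
        _ = (m : ℝ) * n * (n + m) := by simp; ring
  have hmean : twoSampleMean h ξ η m n
      = fun ω ↦ ((m : ℝ) * n)⁻¹ * ∑ p ∈ range m ×ˢ range n, h (ξ p.1 ω) (η p.2 ω) := by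
    ext ω; rw [twoSampleMean, sum_product]
  rw [hmean, variance_const_mul]
  calc ((m : ℝ) * n)⁻¹ ^ 2 * Var[fun ω ↦ ∑ p ∈ range m ×ˢ range n, h (ξ p.1 ω) (η p.2 ω); P]
      ≤ ((m : ℝ) * n)⁻¹ ^ 2 * ((m : ℝ) * n * (n + m)) := by gcongr
    _ = (m : ℝ)⁻¹ + (n : ℝ)⁻¹ := by field_simp

lemma measure_lt_abs_twoSampleMean_sub_le [IsProbabilityMeasure P] (hS : IsTwoSampleIID P ξ η)
    (hhm : Measurable (uncurry h)) (hh : ∀ a b, h a b ∈ Set.Icc 0 1) {m n : ℕ} (hm : m ≠ 0)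
    (hn : n ≠ 0) {ε : ℝ} (hε : 0 < ε) :
    P {ω | ε < |twoSampleMean h ξ η m n ω - ∫ ω, h (ξ 0 ω) (η 0 ω) ∂P|}
      ≤ ENNReal.ofReal (((m : ℝ)⁻¹ + (n : ℝ)⁻¹) / ε ^ 2) := by
  rw [← hS.integral_twoSampleMean hhm hh hm hn]
  calc P {ω | ε < |twoSampleMean h ξ η m n ω - P[twoSampleMean h ξ η m n]|}
      ≤ P {ω | ε ≤ |twoSampleMean h ξ η m n ω - P[twoSampleMean h ξ η m n]|} :=
        measure_mono fun ω hω ↦ le_of_lt (α := ℝ) hω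
    _ ≤ ENNReal.ofReal (Var[twoSampleMean h ξ η m n; P] / ε ^ 2) :=
        meas_ge_le_variance_div_sq (hS.memLp_twoSampleMean hhm hh m n) hε
    _ ≤ _ := by gcongr; exact hS.variance_twoSampleMean_le hhm hh hm hn

end IsTwoSampleIID

lemma tendsto_inv_add_inv_comap_min :
    Tendsto (fun mn : ℕ × ℕ ↦ (mn.1 : ℝ)⁻¹ + (mn.2 : ℝ)⁻¹)
      (comap (fun mn : ℕ × ℕ ↦ min mn.1 mn.2) atTop) (𝓝 0) := by
  have hmin : Tendsto (fun mn : ℕ × ℕ ↦ min mn.1 mn.2) (comap _ atTop) atTop := tendsto_comap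
  have h₁ := tendsto_atTop_mono (fun mn ↦ min_le_left _ _) hmin
  have h₂ := tendsto_atTop_mono (fun mn ↦ min_le_right _ _) hmin
  simpa using (tendsto_inv_atTop_zero (𝕜 := ℝ) |>.comp (tendsto_natCast_atTop_atTop.comp h₁)).add
    (tendsto_inv_atTop_zero (𝕜 := ℝ) |>.comp (tendsto_natCast_atTop_atTop.comp h₂))

end TwoSample

/-- **Law of large numbers for two-sample averages of a bounded kernel.**
`(ξ i)` and `(η j)` are two mutually independent sequences of i.i.d. random elements of
`E₁` and `E₂`, and `h : E₁ × E₂ → [0,1]` is a measurable kernel.  Then, as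
`min (m, n) → ∞`, the two-sample average `(1/(m n)) ∑_{i<m} ∑_{j<n} h (ξ i) (η j)`
converges in probability to `E[h (ξ 0) (η 0)]`. -/
theorem two_sample_lln
    {Ω E₁ E₂ : Type*} [MeasurableSpace Ω] [MeasurableSpace E₁] [MeasurableSpace E₂]
    (P : Measure Ω) [IsProbabilityMeasure P]
    (ξ : ℕ → Ω → E₁) (η : ℕ → Ω → E₂)
    (hξm : ∀ i, Measurable (ξ i)) (hηm : ∀ j, Measurable (η j))
    -- each sequence is i.i.d.:
    (hξindep : iIndepFun ξ P)
    (hηindep : iIndepFun η P)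
    (hξident : ∀ i, Measure.map (ξ i) P = Measure.map (ξ 0) P)
    (hηident : ∀ j, Measure.map (η j) P = Measure.map (η 0) P)
    -- the two sequences are mutually independent:
    (hmutual : IndepFun (fun ω i => ξ i ω) (fun ω j => η j ω) P)
    (h : E₁ → E₂ → ℝ) (hhm : Measurable (Function.uncurry h))
    (hhrange : ∀ a b, h a b ∈ Set.Icc (0 : ℝ) 1) :
    ∀ ε > 0,
      Tendsto
        (fun mn : ℕ × ℕ =>
          P {ω | ε <
            |((mn.1 : ℝ) * (mn.2 : ℝ))⁻¹ *
                ∑ i ∈ Finset.range mn.1, ∑ j ∈ Finset.range mn.2, h (ξ i ω) (η j ω)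
              - ∫ ω', h (ξ 0 ω') (η 0 ω') ∂P|})
        (Filter.comap (fun mn : ℕ × ℕ => min mn.1 mn.2) atTop) (𝓝 0) := by
  intro ε hε
  have hS : IsTwoSampleIID P ξ η := ⟨hξm, hηm, hξindep, hηindep, hξident, hηident, hmutual⟩
  have hmin : ∀ᶠ mn : ℕ × ℕ in comap (fun mn ↦ min mn.1 mn.2) atTop, 1 ≤ min mn.1 mn.2 :=
    tendsto_comap.eventually (eventually_ge_atTop 1)
  refine tendsto_of_tendsto_of_tendsto_of_le_of_le' tendsto_const_nhds
    (by simpa using ENNReal.tendsto_ofReal (tendsto_inv_add_inv_comap_min.div_const (ε ^ 2)))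
    (Eventually.of_forall fun _ ↦ zero_le) ?_
  filter_upwards [hmin] with mn hmn
  exact hS.measure_lt_abs_twoSampleMean_sub_le hhm hhrange (by omega) (by omega) hε
end
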